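/- arXiv:2510.07994 — 9 statements merged into one kernel-verified Lean document; each statement's English description precedes it below -/
import Mathlib

section
/- Suppose the principal has stable preferred strategies at some α* ∈ argmax_{α ∈ A} V(α). Then there is no value of commitment: there exist α̂ ∈ A and σ̂ ∈ C(α̂) such that v(α̂, σ̂) = V* and v(α̂, σ̂) ≥ v(α, σ̂) for all α ∈ A. -/
/-- If the principal has stable preferred strategies at an optimal
mechanism `α*`, then there is no value of commitment: there exist `α̂ ∈ A` and
`σ̂ ∈ C(α̂)` such that `v(α̂, σ̂) = V*` and `v(α̂, σ̂) ≥ v(α, σ̂)` for all `α ∈ A`. -/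
theorem stable_preferred_strategies_imply_no_value_of_commitment
    {n m : ℕ}
    (A : Set (EuclideanSpace ℝ (Fin n)))
    (T : Set (EuclideanSpace ℝ (Fin m)))
    (hAne : A.Nonempty) (hAcomp : IsCompact A) (hAconv : Convex ℝ A)
    (hTne : T.Nonempty) (hTcomp : IsCompact T) (hTconv : Convex ℝ T)
    -- the correspondence C with nonempty, closed, convex values, uhc
    (C : EuclideanSpace ℝ (Fin n) → Set (EuclideanSpace ℝ (Fin m)))
    (hCsub : ∀ α ∈ A, C α ⊆ T)
    (hCne : ∀ α ∈ A, (C α).Nonempty)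
    (hCcl : ∀ α ∈ A, IsClosed (C α))
    (hCconv : ∀ α ∈ A, Convex ℝ (C α))
    (hCuhc : ∀ α ∈ A, ∀ U : Set (EuclideanSpace ℝ (Fin m)), IsOpen U → C α ⊆ U →
      ∃ δ > (0 : ℝ), ∀ α' ∈ A, ‖α' - α‖ < δ → C α' ⊆ U)
    -- the payoff function v : jointly continuous, concave in α, affine in σ
    (v : EuclideanSpace ℝ (Fin n) → EuclideanSpace ℝ (Fin m) → ℝ)
    (hvcont : Continuous fun p : EuclideanSpace ℝ (Fin n) × EuclideanSpace ℝ (Fin m) =>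
      v p.1 p.2)
    (hvconc : ∀ σ ∈ T, ConcaveOn ℝ A fun α => v α σ)
    (hvaff : ∀ α ∈ A, ∀ σ₁ ∈ T, ∀ σ₂ ∈ T, ∀ t : ℝ, 0 ≤ t → t ≤ 1 →
      v α ((1 - t) • σ₁ + t • σ₂) = (1 - t) * v α σ₁ + t * v α σ₂)
    -- the value function V(α) = max_{σ ∈ C(α)} v(α, σ), and V* = max_{α ∈ A} V(α)
    (V : EuclideanSpace ℝ (Fin n) → ℝ)
    (hV : ∀ α ∈ A, IsGreatest ((fun σ => v α σ) '' C α) (V α))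
    (Vstar : ℝ)
    (hVstar : IsGreatest (V '' A) Vstar)
    -- α* is an optimal mechanism
    (αstar : EuclideanSpace ℝ (Fin n))
    (hαstarA : αstar ∈ A)
    (hαstaropt : V αstar = Vstar)
    -- stable preferred strategies at α*
    (hstable : ∃ ε > (0 : ℝ), ∀ α ∈ A, ‖α - αstar‖ < ε →
      ∃ σ ∈ C α, v αstar σ = Vstar) :
    ∃ αhat ∈ A, ∃ σhat ∈ C αhat,
      v αhat σhat = Vstar ∧ ∀ α ∈ A, v α σhat ≤ v αhat σhat := by
  classical
  obtain ⟨ε, hε, hstab⟩ := hstable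
  -- continuity of v in each argument
  have hvc2 : ∀ α, Continuous (fun σ => v α σ) :=
    fun α => hvcont.comp (Continuous.prodMk_right α)
  -- the set of optimal strategies at αstar that certify Vstar
  set S : Set (EuclideanSpace ℝ (Fin m)) :=
    {σ | σ ∈ C αstar ∧ v αstar σ = Vstar} with hSdef
  have hST : S ⊆ T := fun σ hσ => hCsub αstar hαstarA hσ.1
  have hSne : S.Nonempty := by
    obtain ⟨σ, hσC, hσv⟩ := hstab αstar hαstarA (by simpa using hε)
    exact ⟨σ, hσC, hσv⟩
  have hScl : IsClosed S :=
    (hCcl _ hαstarA).inter (isClosed_eq (hvc2 αstar) continuous_const)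
  have hScomp : IsCompact S := hTcomp.of_isClosed_subset hScl hST
  have hSconv : Convex ℝ S := by
    intro σ hσ σ' hσ' a b ha hb hab
    refine ⟨hCconv αstar hαstarA hσ.1 hσ'.1 ha hb hab, ?_⟩
    obtain rfl : a = 1 - b := by linarith
    rw [hvaff αstar hαstarA σ (hST hσ) σ' (hST hσ') b hb (by linarith), hσ.2, hσ'.2]
    ring
  -- STEP 1 : for every α ∈ A there is σ ∈ S with v α σ ≤ Vstar
  have step1 : ∀ α ∈ A, ∃ σ ∈ S, v α σ ≤ Vstar := by
    intro α hα
    set c : ℝ := min 1 (ε / (‖α - αstar‖ + 1)) with hc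
    have hnp : (0:ℝ) < ‖α - αstar‖ + 1 := by positivity
    have hc_pos : 0 < c := lt_min one_pos (div_pos hε hnp)
    have hc1 : c ≤ 1 := min_le_left _ _
    set t : ℕ → ℝ := fun k => c / ((k:ℝ) + 1) with ht
    have htpos : ∀ k, 0 < t k := fun k => div_pos hc_pos (by positivity)
    have htc : ∀ k, t k ≤ c := by
      intro k
      have h1 : (1:ℝ) ≤ (k:ℝ) + 1 := by
        have := Nat.cast_nonneg (α := ℝ) k; linarith
      exact div_le_self hc_pos.le h1
    have ht1 : ∀ k, t k ≤ 1 := fun k => (htc k).trans hc1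
    set αt : ℕ → EuclideanSpace ℝ (Fin n) :=
      fun k => (1 - t k) • αstar + t k • α with hαt
    have h01 : ∀ k, (0:ℝ) ≤ 1 - t k := fun k => by linarith [ht1 k]
    have h03 : ∀ k, (1 - t k) + t k = 1 := fun k => by ring
    have hαtA : ∀ k, αt k ∈ A := fun k =>
      hAconv hαstarA hα (h01 k) (htpos k).le (h03 k)
    have hαtnorm : ∀ k, ‖αt k - αstar‖ = t k * ‖α - αstar‖ := by
      intro k
      have e : αt k - αstar = t k • (α - αstar) := by
        rw [hαt]; simp only []
        rw [sub_smul, one_smul, smul_sub]; abel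
      rw [e, norm_smul, Real.norm_eq_abs, abs_of_pos (htpos k)]
    have hαtlt : ∀ k, ‖αt k - αstar‖ < ε := by
      intro k
      rw [hαtnorm k]
      calc t k * ‖α - αstar‖ ≤ c * ‖α - αstar‖ :=
            mul_le_mul_of_nonneg_right (htc k) (norm_nonneg _)
        _ ≤ (ε / (‖α - αstar‖ + 1)) * ‖α - αstar‖ :=
            mul_le_mul_of_nonneg_right (min_le_right _ _) (norm_nonneg _)
        _ < (ε / (‖α - αstar‖ + 1)) * (‖α - αstar‖ + 1) := by
            have := div_pos hε hnp
            nlinarith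
        _ = ε := div_mul_cancel₀ ε hnp.ne'
    choose σ hσC hσv using fun k => hstab (αt k) (hαtA k) (hαtlt k)
    have hσT : ∀ k, σ k ∈ T := fun k => hCsub _ (hαtA k) (hσC k)
    have hkey : ∀ k, v α (σ k) ≤ Vstar := by
      intro k
      have hconc := (hvconc (σ k) (hσT k)).2 hαstarA hα (h01 k) (htpos k).le (h03 k)
      simp only [smul_eq_mul] at hconc
      rw [hσv k] at hconc
      have h1 : v (αt k) (σ k) ≤ V (αt k) :=
        (hV _ (hαtA k)).2 (Set.mem_image_of_mem _ (hσC k))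
      have h2 : V (αt k) ≤ Vstar := hVstar.2 (Set.mem_image_of_mem _ (hαtA k))
      have h3 : (1 - t k) * Vstar + t k * v α (σ k) ≤ Vstar := by
        calc (1 - t k) * Vstar + t k * v α (σ k) ≤ v (αt k) (σ k) := hconc
          _ ≤ Vstar := h1.trans h2
      nlinarith [htpos k]
    obtain ⟨σ₀, hσ₀T, φ, hφ, hφtend⟩ := hTcomp.tendsto_subseq hσT
    have l1 : Filter.Tendsto (fun k => v αstar (σ (φ k))) Filter.atTop (nhds (v αstar σ₀)) :=
      ((hvc2 αstar).tendsto σ₀).comp hφtend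
    have e1 : v αstar σ₀ = Vstar := by
      have l1' : Filter.Tendsto (fun _ : ℕ => Vstar) Filter.atTop (nhds (v αstar σ₀)) := by
        have : (fun k => v αstar (σ (φ k))) = fun _ : ℕ => Vstar :=
          funext fun k => hσv _
        rwa [this] at l1
      exact tendsto_nhds_unique l1' tendsto_const_nhds
    have e2 : v α σ₀ ≤ Vstar :=
      le_of_tendsto (((hvc2 α).tendsto σ₀).comp hφtend)
        (Filter.Eventually.of_forall fun k => hkey _)
    -- σ₀ ∈ C αstar via upper hemicontinuity
    have hmem : σ₀ ∈ C αstar := by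
      by_contra hmem
      obtain ⟨r, hr, hball⟩ := Metric.isOpen_iff.1 (hCcl αstar hαstarA).isOpen_compl σ₀ hmem
      have hUopen : IsOpen ((Metric.closedBall σ₀ (r/2))ᶜ) :=
        Metric.isClosed_closedBall.isOpen_compl
      have hUsub : C αstar ⊆ (Metric.closedBall σ₀ (r/2))ᶜ := by
        intro x hx hxball
        have : x ∈ Metric.ball σ₀ r :=
          Metric.mem_ball.2 (lt_of_le_of_lt (Metric.mem_closedBall.1 hxball) (by linarith))
        exact hball this hx
      obtain ⟨δ, hδ, hδprop⟩ := hCuhc αstar hαstarA _ hUopen hUsub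
      have hdist : ∀ᶠ k in Filter.atTop, dist (σ (φ k)) σ₀ < r/2 := by
        have := Metric.tendsto_nhds.1 hφtend (r/2) (by linarith)
        simpa using this
      have htend0 : Filter.Tendsto (fun k => ‖αt (φ k) - αstar‖) Filter.atTop (nhds 0) := by
        have base : Filter.Tendsto (fun k : ℕ => t k * ‖α - αstar‖) Filter.atTop (nhds 0) := by
          have h0 : Filter.Tendsto (fun k : ℕ => c * (1 / ((k:ℝ) + 1)))
              Filter.atTop (nhds (c * 0)) :=
            tendsto_one_div_add_atTop_nhds_zero_nat.const_mul c
          have h0' : Filter.Tendsto t Filter.atTop (nhds 0) := by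
            have : (fun k : ℕ => c * (1 / ((k:ℝ) + 1))) = t := by
              funext k; rw [ht]; ring
            rwa [this, mul_zero] at h0
          have := h0'.mul_const ‖α - αstar‖
          rwa [zero_mul] at this
        have comp := base.comp (hφ.tendsto_atTop)
        exact comp.congr fun k => (hαtnorm (φ k)).symm
      have hsmall : ∀ᶠ k in Filter.atTop, ‖αt (φ k) - αstar‖ < δ :=
        htend0.eventually_lt_const hδ
      obtain ⟨k, hk1, hk2⟩ := (hdist.and hsmall).exists
      have : σ (φ k) ∈ (Metric.closedBall σ₀ (r/2))ᶜ :=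
        hδprop (αt (φ k)) (hαtA _) hk2 (hσC (φ k))
      exact this (Metric.mem_closedBall.2 hk1.le)
    exact ⟨σ₀, ⟨hmem, e1⟩, e2⟩
  -- STEP 2 : finitely many constraints can be satisfied simultaneously
  have step2 : ∀ (k : ℕ) (α : Fin k → EuclideanSpace ℝ (Fin n)), (∀ i, α i ∈ A) →
      ∃ σ ∈ S, ∀ i, v (α i) σ ≤ Vstar := by
    intro k α hαA
    rcases isEmpty_or_nonempty (Fin k) with hk | hk
    · obtain ⟨σ₁, hσ₁⟩ := hSne
      exact ⟨σ₁, hσ₁, fun i => hk.elim i⟩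
    by_contra hcon
    push_neg at hcon
    set φ : EuclideanSpace ℝ (Fin m) → (Fin k → ℝ) := fun σ i => v (α i) σ with hφdef
    set E : Set (Fin k → ℝ) := φ '' S with hEdef
    have hEconv : Convex ℝ E := by
      rintro _ ⟨σ, hσ, rfl⟩ _ ⟨σ', hσ', rfl⟩ a b ha hb hab
      refine ⟨a • σ + b • σ', hSconv hσ hσ' ha hb hab, ?_⟩
      funext i
      simp only [hφdef, Pi.add_apply, Pi.smul_apply, smul_eq_mul]
      obtain rfl : a = 1 - b := by linarith
      exact hvaff (α i) (hαA i) σ (hST hσ) σ' (hST hσ') b hb (by linarith)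
    have hφcont : Continuous φ := continuous_pi fun i => hvc2 (α i)
    have hEcomp : IsCompact E := hScomp.image hφcont
    set Q : Set (Fin k → ℝ) := Set.pi Set.univ (fun _ => Set.Iic Vstar) with hQdef
    have hQconv : Convex ℝ Q := convex_pi fun i _ => convex_Iic Vstar
    have hQcl : IsClosed Q := isClosed_set_pi fun i _ => isClosed_Iic
    have hdisj : Disjoint E Q := by
      rw [Set.disjoint_left]
      rintro _ ⟨σ, hσ, rfl⟩ hQ
      obtain ⟨i, hi⟩ := hcon σ hσ
      exact absurd (hQ i (Set.mem_univ i)) (not_le.2 hi)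
    obtain ⟨f, u, w, hfu, huw, hwf⟩ :=
      geometric_hahn_banach_compact_closed hEconv hEcomp hQconv hQcl hdisj
    set p : Fin k → ℝ := fun i => f (Pi.single i 1) with hpdef
    have hfz : ∀ z : Fin k → ℝ, f z = ∑ i, z i * p i := by
      intro z
      have hz : z = ∑ i, z i • (Pi.single i (1:ℝ) : Fin k → ℝ) := by
        conv_lhs => rw [← Finset.univ_sum_single z]
        refine Finset.sum_congr rfl fun i _ => ?_
        ext j
        rcases eq_or_ne j i with rfl | hne
        · simp
        · simp [Pi.single_eq_of_ne hne]
      conv_lhs => rw [hz]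
      rw [map_sum]
      exact Finset.sum_congr rfl fun i _ => by rw [map_smul, smul_eq_mul]
    have hconstQ : (fun _ : Fin k => Vstar) ∈ Q := fun j _ => Set.mem_Iic.2 le_rfl
    have hwconst : w < f (fun _ => Vstar) := hwf _ hconstQ
    have hpnonpos : ∀ i, p i ≤ 0 := by
      intro i
      by_contra hp
      push_neg at hp
      set t0 : ℝ := (f (fun _ => Vstar) - w) / p i with ht0def
      have ht0 : 0 < t0 := div_pos (by linarith) hp
      have hbQ : ((fun _ : Fin k => Vstar) + (-(t0+1)) • (Pi.single i (1:ℝ) : Fin k → ℝ)) ∈ Q := by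
        intro j _
        simp only [Pi.add_apply, Pi.smul_apply, smul_eq_mul, Set.mem_Iic]
        rcases eq_or_ne j i with rfl | hne
        · rw [Pi.single_eq_same]; linarith
        · rw [Pi.single_eq_of_ne hne]; simp
      have hlt := hwf _ hbQ
      rw [map_add, map_smul, smul_eq_mul] at hlt
      have ht0' : t0 * p i = f (fun _ => Vstar) - w := div_mul_cancel₀ _ hp.ne'
      have expand : -(t0+1) * p i = -(t0 * p i) - p i := by ring
      rw [expand, ht0'] at hlt
      linarith
    set q : Fin k → ℝ := fun i => -p i with hqdef
    have hq0 : ∀ i, 0 ≤ q i := fun i => neg_nonneg.2 (hpnonpos i)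
    set W : ℝ := ∑ i, q i with hWdef
    have hWnonneg : 0 ≤ W := Finset.sum_nonneg fun i _ => hq0 i
    have hWpos : 0 < W := by
      rcases hWnonneg.lt_or_eq with h | h
      · exact h
      · exfalso
        have hq_eq : ∀ i ∈ Finset.univ, q i = 0 :=
          (Finset.sum_eq_zero_iff_of_nonneg fun i _ => hq0 i).1 h.symm
        have hp0 : ∀ i, p i = 0 := fun i => by
          have := hq_eq i (Finset.mem_univ i)
          simp only [hqdef, neg_eq_zero] at this
          exact this
        obtain ⟨σ₁, hσ₁⟩ := hSne
        have h1 : f (φ σ₁) < u := hfu _ ⟨σ₁, hσ₁, rfl⟩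
        rw [hfz] at h1 hwconst
        simp only [hp0, mul_zero, Finset.sum_const_zero] at h1 hwconst
        linarith
    set lam : Fin k → ℝ := fun i => q i / W with hlamdef
    have hlamnn : ∀ i, 0 ≤ lam i := fun i => div_nonneg (hq0 i) hWnonneg
    have hlamsum : ∑ i, lam i = 1 := by
      rw [hlamdef]
      rw [← Finset.sum_div, ← hWdef, div_self hWpos.ne']
    set αbar : EuclideanSpace ℝ (Fin n) := ∑ i, lam i • α i with hαbardef
    have hαbarA : αbar ∈ A :=
      hAconv.sum_mem (fun i _ => hlamnn i) hlamsum (fun i _ => hαA i)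
    obtain ⟨σ₀, hσ₀S, hσ₀le⟩ := step1 αbar hαbarA
    have hjensen : (∑ i, lam i • v (α i) σ₀) ≤ v αbar σ₀ :=
      (hvconc σ₀ (hST hσ₀S)).le_map_sum (fun i _ => hlamnn i) hlamsum (fun i _ => hαA i)
    have h1 : f (φ σ₀) < f (fun _ => Vstar) :=
      lt_trans (lt_trans (hfu _ ⟨σ₀, hσ₀S, rfl⟩) huw) hwconst
    rw [hfz, hfz] at h1
    -- h1 : ∑ i, v (α i) σ₀ * p i < ∑ i, Vstar * p i
    have h2 : ∑ i, Vstar * q i < ∑ i, v (α i) σ₀ * q i := by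
      have e1 : ∑ i, (φ σ₀) i * p i = -(∑ i, v (α i) σ₀ * q i) := by
        rw [← Finset.sum_neg_distrib]
        exact Finset.sum_congr rfl fun i _ => by simp only [hφdef, hqdef]; ring
      have e2 : ∑ i, (fun _ : Fin k => Vstar) i * p i = -(∑ i, Vstar * q i) := by
        rw [← Finset.sum_neg_distrib]
        exact Finset.sum_congr rfl fun i _ => by simp only [hqdef]; ring
      rw [e1, e2] at h1
      linarith
    have e3 : ∑ i, Vstar * q i = Vstar * W := by
      rw [hWdef, Finset.mul_sum]
    have e4 : ∑ i, lam i • v (α i) σ₀ = (∑ i, v (α i) σ₀ * q i) / W := by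
      rw [Finset.sum_div]
      exact Finset.sum_congr rfl fun i _ => by
        simp only [hlamdef, smul_eq_mul]; ring
    have key : Vstar < ∑ i, lam i • v (α i) σ₀ := by
      rw [e4, lt_div_iff₀ hWpos]
      rw [e3] at h2
      linarith [h2]
    linarith [hjensen, hσ₀le, key]
  -- STEP 3 : compactness (finite intersection property)
  have step3 : ∃ σ ∈ S, ∀ α ∈ A, v α σ ≤ Vstar := by
    set F : ↥A → Set (EuclideanSpace ℝ (Fin m)) :=
      fun a => {σ | v (a : EuclideanSpace ℝ (Fin n)) σ ≤ Vstar} with hFdef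
    have hFcl : ∀ a : ↥A, IsClosed (F a) := fun a =>
      isClosed_le (hvc2 (a : EuclideanSpace ℝ (Fin n))) continuous_const
    have hne : (S ∩ ⋂ a : ↥A, F a).Nonempty := by
      by_contra h
      rw [Set.not_nonempty_iff_eq_empty] at h
      obtain ⟨t, ht⟩ := hScomp.elim_finite_subfamily_closed F hFcl h
      set e := t.equivFin with hedef
      set g : Fin t.card → EuclideanSpace ℝ (Fin n) :=
        fun i => ((e.symm i : ↥t) : ↥A) with hgdef
      have hgA : ∀ i, g i ∈ A := fun i => ((e.symm i : ↥t) : ↥A).2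
      obtain ⟨σ, hσS, hσle⟩ := step2 t.card g hgA
      have hmem : σ ∈ S ∩ ⋂ a ∈ t, F a := by
        refine ⟨hσS, Set.mem_iInter₂.2 fun a ha => ?_⟩
        have := hσle (e ⟨a, ha⟩)
        simp only [hgdef, Equiv.symm_apply_apply] at this
        exact this
      rw [ht] at hmem
      exact hmem
    obtain ⟨σhat, hσhatS, hσhatI⟩ := hne
    exact ⟨σhat, hσhatS, fun α hα => Set.mem_iInter.1 hσhatI ⟨α, hα⟩⟩
  obtain ⟨σhat, hσhatS, hσhatmax⟩ := step3
  exact ⟨αstar, hαstarA, σhat, hσhatS.1, hσhatS.2,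
    fun α hα => (hσhatmax α hα).trans_eq hσhatS.2.symm⟩
end

section
/- Let α* ∈ argmax_{α ∈ A} V(α) and let Ã = A ∩ \overline{B}_ε(α*) be a closed ball around α* on which the stable-preferred-strategies condition holds, i.e. for every α ∈ Ã there exists σ ∈ C(α) with v(α*, σ) = V*. Then there exist α̂ ∈ Ã and σ̂ ∈ Σ such that σ̂ ∈ C(α̂), v(α*, σ̂) = V*, and v(α̂, σ̂) ≥ v(α, σ̂) for all α ∈ Ã. -/
/-- On the closed ball `Ã = A ∩ closedBall α* ε` where the
stable-preferred-strategies condition holds, there exist `α̂ ∈ Ã` and `σ̂`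
such that `σ̂ ∈ C(α̂)`, `v(α*, σ̂) = V*`, and `v(α̂, σ̂) ≥ v(α, σ̂)` for all
`α ∈ Ã` (a fixed point of the product correspondence). -/
theorem fixed_point_on_restricted_ball
    {n m : ℕ}
    (A : Set (EuclideanSpace ℝ (Fin n)))
    (T : Set (EuclideanSpace ℝ (Fin m)))
    (hAne : A.Nonempty) (hAcomp : IsCompact A) (hAconv : Convex ℝ A)
    (hTne : T.Nonempty) (hTcomp : IsCompact T) (hTconv : Convex ℝ T)
    -- the correspondence C with nonempty, closed, convex values, uhc
    (C : EuclideanSpace ℝ (Fin n) → Set (EuclideanSpace ℝ (Fin m)))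
    (hCsub : ∀ α ∈ A, C α ⊆ T)
    (hCne : ∀ α ∈ A, (C α).Nonempty)
    (hCcl : ∀ α ∈ A, IsClosed (C α))
    (hCconv : ∀ α ∈ A, Convex ℝ (C α))
    (hCuhc : ∀ α ∈ A, ∀ U : Set (EuclideanSpace ℝ (Fin m)), IsOpen U → C α ⊆ U →
      ∃ δ > (0 : ℝ), ∀ α' ∈ A, ‖α' - α‖ < δ → C α' ⊆ U)
    -- the payoff function v : jointly continuous, concave in α, affine in σ
    (v : EuclideanSpace ℝ (Fin n) → EuclideanSpace ℝ (Fin m) → ℝ)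
    (hvcont : Continuous fun p : EuclideanSpace ℝ (Fin n) × EuclideanSpace ℝ (Fin m) =>
      v p.1 p.2)
    (hvconc : ∀ σ ∈ T, ConcaveOn ℝ A fun α => v α σ)
    (hvaff : ∀ α ∈ A, ∀ σ₁ ∈ T, ∀ σ₂ ∈ T, ∀ t : ℝ, 0 ≤ t → t ≤ 1 →
      v α ((1 - t) • σ₁ + t • σ₂) = (1 - t) * v α σ₁ + t * v α σ₂)
    -- the value function V(α) = max_{σ ∈ C(α)} v(α, σ), and V* = max_{α ∈ A} V(α)
    (V : EuclideanSpace ℝ (Fin n) → ℝ)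
    (hV : ∀ α ∈ A, IsGreatest ((fun σ => v α σ) '' C α) (V α))
    (Vstar : ℝ)
    (hVstar : IsGreatest (V '' A) Vstar)
    -- α* is an optimal mechanism
    (αstar : EuclideanSpace ℝ (Fin n))
    (hαstarA : αstar ∈ A)
    (hαstaropt : V αstar = Vstar)
    -- the closed ball Ã around α* on which stable preferred strategies hold
    (ε : ℝ) (hε : 0 < ε)
    (hstable : ∀ α ∈ A ∩ Metric.closedBall αstar ε, ∃ σ ∈ C α, v αstar σ = Vstar) :
    ∃ αhat ∈ A ∩ Metric.closedBall αstar ε, ∃ σhat ∈ T,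
      σhat ∈ C αhat ∧ v αstar σhat = Vstar ∧
      ∀ α ∈ A ∩ Metric.closedBall αstar ε, v α σhat ≤ v αhat σhat := by
  classical
  set At : Set (EuclideanSpace ℝ (Fin n)) := A ∩ Metric.closedBall αstar ε with hAt
  have hAtconv : Convex ℝ At := hAconv.inter (convex_closedBall _ _)
  have hαstarAt : αstar ∈ At := ⟨hαstarA, Metric.mem_closedBall_self hε.le⟩
  -- the set K = D(α*) of preferred strategies at α*
  set K : Set (EuclideanSpace ℝ (Fin m)) :=
    C αstar ∩ {σ | v αstar σ = Vstar} with hKdef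
  have hKT : K ⊆ T := fun σ hσ => hCsub αstar hαstarA hσ.1
  have hvαcont : ∀ α : EuclideanSpace ℝ (Fin n), Continuous fun σ => v α σ :=
    fun α => hvcont.comp (Continuous.prodMk_right α)
  have hKcl : IsClosed K :=
    (hCcl αstar hαstarA).inter (isClosed_eq (hvαcont αstar) continuous_const)
  have hKcomp : IsCompact K := hTcomp.of_isClosed_subset hKcl hKT
  have hKconv : Convex ℝ K := by
    intro σ₁ h1 σ₂ h2 a b ha hb hab
    have ha' : a = 1 - b := by linarith
    refine ⟨hCconv αstar hαstarA h1.1 h2.1 ha hb hab, ?_⟩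
    have := hvaff αstar hαstarA σ₁ (hKT h1) σ₂ (hKT h2) b hb (by linarith)
    have h1' : v αstar σ₁ = Vstar := h1.2
    have h2' : v αstar σ₂ = Vstar := h2.2
    show v αstar (a • σ₁ + b • σ₂) = Vstar
    rw [ha', this, h1', h2']; ring
  -- Key lemma: for every β ∈ Ã there is σ ∈ K with v β σ ≤ Vstar
  have key : ∀ β ∈ At, ∃ σ ∈ K, v β σ ≤ Vstar := by
    intro β hβ
    set t : ℕ → ℝ := fun j => ((j : ℝ) + 2)⁻¹ with htdef
    have ht0 : ∀ j, 0 < t j := fun j => by positivity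
    have ht1 : ∀ j, t j ≤ 1 := by
      intro j
      rw [htdef]
      rw [inv_le_one_iff₀]
      right
      have : (0:ℝ) ≤ (j:ℝ) := Nat.cast_nonneg j
      linarith
    have htlim : Filter.Tendsto t Filter.atTop (nhds 0) := by
      apply tendsto_inv_atTop_zero.comp
      exact Filter.tendsto_atTop_add_const_right _ 2 tendsto_natCast_atTop_atTop
    set α : ℕ → EuclideanSpace ℝ (Fin n) :=
      fun j => (1 - t j) • αstar + t j • β with hαdef
    have hαAt : ∀ j, α j ∈ At := by
      intro j
      exact hAtconv hαstarAt hβ (by linarith [ht1 j]) (ht0 j).le (by ring)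
    have hsel : ∀ j, ∃ σ ∈ C (α j), v αstar σ = Vstar := fun j => hstable _ (hαAt j)
    choose σs hσsC hσsV using hsel
    have hσsT : ∀ j, σs j ∈ T := fun j => hCsub _ (hαAt j).1 (hσsC j)
    have hineq : ∀ j, v β (σs j) ≤ Vstar := by
      intro j
      have h1 : v (α j) (σs j) ≤ V (α j) :=
        (hV (α j) (hαAt j).1).2 ⟨σs j, hσsC j, rfl⟩
      have h2 : V (α j) ≤ Vstar := hVstar.2 ⟨α j, (hαAt j).1, rfl⟩
      have h3 : (1 - t j) • v αstar (σs j) + t j • v β (σs j) ≤ v (α j) (σs j) :=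
        (hvconc (σs j) (hσsT j)).2 hαstarA hβ.1 (by linarith [ht1 j]) (ht0 j).le (by ring)
      rw [hσsV j] at h3
      simp only [smul_eq_mul] at h3
      nlinarith [ht0 j]
    obtain ⟨σ₀, hσ₀T, φ, hφmono, hφlim⟩ := hTcomp.tendsto_subseq hσsT
    have htφ : Filter.Tendsto (fun j => t (φ j)) Filter.atTop (nhds 0) :=
      htlim.comp hφmono.tendsto_atTop
    have hαlim : Filter.Tendsto (fun j => α (φ j)) Filter.atTop (nhds αstar) := by
      have h1 : Filter.Tendsto (fun j => (1 - t (φ j)) • αstar + t (φ j) • β)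
          Filter.atTop (nhds ((1 - (0:ℝ)) • αstar + (0:ℝ) • β)) := by
        exact ((tendsto_const_nhds.sub htφ).smul tendsto_const_nhds).add
          (htφ.smul tendsto_const_nhds)
      simpa using h1
    have hσ₀C : σ₀ ∈ C αstar := by
      by_contra hc
      have hne := hCne αstar hαstarA
      have hcl := hCcl αstar hαstarA
      have hpos : 0 < Metric.infDist σ₀ (C αstar) :=
        (hcl.notMem_iff_infDist_pos hne).1 hc
      set r := Metric.infDist σ₀ (C αstar) with hrdef
      obtain ⟨δ, hδ, hδ'⟩ := hCuhc αstar hαstarA (Metric.thickening (r/2) (C αstar))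
        Metric.isOpen_thickening (Metric.self_subset_thickening (by linarith) _)
      have hev : ∀ᶠ j in Filter.atTop, dist (α (φ j)) αstar < δ :=
        Metric.tendsto_nhds.mp hαlim δ hδ
      have hev2 : ∀ᶠ j in Filter.atTop,
          Metric.infDist (σs (φ j)) (C αstar) ≤ r / 2 := by
        filter_upwards [hev] with j hj
        have hmem : σs (φ j) ∈ Metric.thickening (r/2) (C αstar) := by
          apply hδ' (α (φ j)) (hαAt (φ j)).1 _ (hσsC (φ j))
          rw [← dist_eq_norm]; exact hj
        exact ((Metric.mem_thickening_iff_infDist_lt hne).1 hmem).le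
      have hcont : Filter.Tendsto (fun j => Metric.infDist (σs (φ j)) (C αstar))
          Filter.atTop (nhds (Metric.infDist σ₀ (C αstar))) :=
        ((Metric.continuous_infDist_pt (C αstar)).tendsto σ₀).comp hφlim
      have : Metric.infDist σ₀ (C αstar) ≤ r / 2 := le_of_tendsto hcont hev2
      rw [← hrdef] at this
      linarith
    have hσ₀V : v αstar σ₀ = Vstar := by
      have h1 : Filter.Tendsto (fun j => v αstar (σs (φ j))) Filter.atTop
          (nhds (v αstar σ₀)) := ((hvαcont αstar).tendsto σ₀).comp hφlim
      have h2 : (fun j => v αstar (σs (φ j))) = fun _ => Vstar := by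
        funext j; exact hσsV (φ j)
      rw [h2] at h1
      exact tendsto_nhds_unique h1 tendsto_const_nhds
    have hσ₀le : v β σ₀ ≤ Vstar := by
      have h1 : Filter.Tendsto (fun j => v β (σs (φ j))) Filter.atTop
          (nhds (v β σ₀)) := ((hvαcont β).tendsto σ₀).comp hφlim
      exact le_of_tendsto h1 (Filter.Eventually.of_forall fun j => hineq (φ j))
    exact ⟨σ₀, ⟨hσ₀C, hσ₀V⟩, hσ₀le⟩
  -- Finite intersection property via Hahn-Banach separation
  have hfin : ∀ u : Finset {β // β ∈ At},
      (K ∩ ⋂ i ∈ u, {σ | v i.1 σ ≤ Vstar}).Nonempty := by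
    intro u
    by_contra hcon
    set Φ : EuclideanSpace ℝ (Fin m) → ({i // i ∈ u} → ℝ) :=
      fun σ i => v i.1.1 σ - Vstar with hΦdef
    set e : {i // i ∈ u} → ({i // i ∈ u} → ℝ) := fun i => Pi.single i 1 with hedef
    have hΦcont : Continuous Φ :=
      continuous_pi fun i => (hvαcont i.1.1).sub continuous_const
    set P : Set ({i // i ∈ u} → ℝ) := Φ '' K with hPdef
    set Q : Set ({i // i ∈ u} → ℝ) := ⋂ i, {x : {i // i ∈ u} → ℝ | x i ≤ 0} with hQdef
    have hmemQ : ∀ x : {i // i ∈ u} → ℝ, x ∈ Q ↔ ∀ i, x i ≤ 0 :=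
      fun x => Set.mem_iInter
    have hPconv : Convex ℝ P := by
      rintro _ ⟨σ₁, hσ₁, rfl⟩ _ ⟨σ₂, hσ₂, rfl⟩ a b ha hb hab
      have ha' : a = 1 - b := by linarith
      refine ⟨a • σ₁ + b • σ₂, hKconv hσ₁ hσ₂ ha hb hab, ?_⟩
      funext i
      have haff := hvaff i.1.1 i.1.2.1 σ₁ (hKT hσ₁) σ₂ (hKT hσ₂) b hb (by linarith)
      show v i.1.1 (a • σ₁ + b • σ₂) - Vstar
          = a * (v i.1.1 σ₁ - Vstar) + b * (v i.1.1 σ₂ - Vstar)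
      rw [ha', haff]; ring
    have hPcomp : IsCompact P := hKcomp.image hΦcont
    have hQconv : Convex ℝ Q := by
      intro x hx y hy a b ha hb hab
      rw [hmemQ] at hx hy ⊢
      intro i
      have hab' : (a • x + b • y) i = a * x i + b * y i := rfl
      rw [hab']
      nlinarith [hx i, hy i]
    have hQcl : IsClosed Q :=
      isClosed_iInter fun i => isClosed_le (continuous_apply i) continuous_const
    have hdisj : Disjoint P Q := by
      rw [Set.disjoint_left]
      rintro _ ⟨σ, hσK, rfl⟩ hQmem
      refine hcon ⟨σ, hσK, ?_⟩
      apply Set.mem_iInter₂.2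
      intro i hi
      have h2 : v i.1 σ - Vstar ≤ 0 := (hmemQ _).1 hQmem ⟨i, hi⟩
      simp only [Set.mem_setOf_eq]
      linarith
    obtain ⟨f, u0, v0, hfP, huv, hfQ⟩ :=
      geometric_hahn_banach_compact_closed hPconv hPcomp hQconv hQcl hdisj
    have h0Q : (0 : {i // i ∈ u} → ℝ) ∈ Q := (hmemQ _).2 fun i => le_refl 0
    have hv0 : v0 < 0 := by
      have := hfQ 0 h0Q
      rwa [map_zero] at this
    have hu0 : u0 < 0 := lt_trans huv hv0
    have hsingle : ∀ (i : {i // i ∈ u}) (c : ℝ),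
        (Pi.single i c : {i // i ∈ u} → ℝ) = c • e i := by
      intro i c
      rw [hedef]
      rw [← Pi.single_smul, smul_eq_mul, mul_one]
    have hlam : ∀ i : {i // i ∈ u}, f (e i) ≤ 0 := by
      intro i
      by_contra hpos
      push_neg at hpos
      have hQmem : (Pi.single i ((v0 - 1) / f (e i)) : {i // i ∈ u} → ℝ) ∈ Q := by
        refine (hmemQ _).2 fun k => ?_
        rcases eq_or_ne k i with rfl | hk
        · rw [Pi.single_eq_same]
          apply div_nonpos_of_nonpos_of_nonneg (by linarith) hpos.le
        · rw [Pi.single_eq_of_ne hk]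
      have hval : f (Pi.single i ((v0 - 1) / f (e i))) = v0 - 1 := by
        rw [hsingle, map_smul, smul_eq_mul, div_mul_cancel₀]
        exact ne_of_gt hpos
      have := hfQ _ hQmem
      rw [hval] at this
      linarith
    have hrep : ∀ x : {i // i ∈ u} → ℝ, f x = ∑ i, x i * f (e i) := by
      intro x
      conv_lhs => rw [← Finset.univ_sum_single x]
      rw [map_sum]
      apply Finset.sum_congr rfl
      intro i _
      rw [hsingle, map_smul, smul_eq_mul]
    set μ : {i // i ∈ u} → ℝ := fun i => -f (e i) with hμdef
    have hμ0 : ∀ i, 0 ≤ μ i := fun i => neg_nonneg.2 (hlam i)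
    have hKlb : ∀ σ ∈ K, -u0 < ∑ i, μ i * (v i.1.1 σ - Vstar) := by
      intro σ hσ
      have h1 : f (Φ σ) < u0 := hfP _ ⟨σ, hσ, rfl⟩
      rw [hrep] at h1
      have h2 : ∑ i, (Φ σ) i * f (e i) = -∑ i, μ i * (v i.1.1 σ - Vstar) := by
        rw [← Finset.sum_neg_distrib]
        apply Finset.sum_congr rfl
        intro i _
        simp only [hΦdef, hμdef]; ring
      rw [h2] at h1
      linarith
    set s := ∑ i, μ i with hsdef
    have hs0 : 0 < s := by
      rcases (Finset.sum_nonneg fun i _ => hμ0 i).lt_or_eq with h | h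
      · exact h
      · exfalso
        have hzero : ∀ i ∈ Finset.univ, μ i = 0 :=
          (Finset.sum_eq_zero_iff_of_nonneg fun i _ => hμ0 i).1 h.symm
        obtain ⟨σK, hσK, _⟩ := key αstar hαstarAt
        have := hKlb σK hσK
        rw [Finset.sum_congr rfl fun i hi => by rw [hzero i hi, zero_mul]] at this
        simp at this
        linarith
    set w : {i // i ∈ u} → ℝ := fun i => μ i / s with hwdef
    have hw0 : ∀ i, 0 ≤ w i := fun i => div_nonneg (hμ0 i) hs0.le
    have hw1 : ∑ i, w i = 1 := by
      rw [hwdef]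
      rw [← Finset.sum_div, ← hsdef, div_self (ne_of_gt hs0)]
    set βbar : EuclideanSpace ℝ (Fin n) := ∑ i, w i • (i.1.1 : EuclideanSpace ℝ (Fin n))
      with hβbardef
    have hβbarAt : βbar ∈ At :=
      hAtconv.sum_mem (fun i _ => hw0 i) hw1 (fun i _ => i.1.2)
    obtain ⟨σK, hσK, hσKle⟩ := key βbar hβbarAt
    have hjen : ∑ i, w i • v i.1.1 σK ≤ v βbar σK :=
      (hvconc σK (hKT hσK)).le_map_sum (fun i _ => hw0 i) hw1 (fun i _ => i.1.2.1)
    have hlb : Vstar < ∑ i, w i • v i.1.1 σK := by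
      have h1 := hKlb σK hσK
      have h2 : ∑ i, w i • v i.1.1 σK
          = (∑ i, μ i * (v i.1.1 σK - Vstar)) / s + Vstar := by
        rw [Finset.sum_div]
        have : ∀ i ∈ Finset.univ, w i • v i.1.1 σK
            = μ i * (v i.1.1 σK - Vstar) / s + w i * Vstar := by
          intro i _
          rw [hwdef]
          field_simp
          rw [smul_eq_mul, ← mul_assoc, mul_div_cancel₀ (μ i) (ne_of_gt hs0)]
          ring
        rw [Finset.sum_congr rfl this, Finset.sum_add_distrib, ← Finset.sum_mul, hw1]
        simp [Finset.sum_div]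
      rw [h2]
      have h3 : 0 < (∑ i, μ i * (v i.1.1 σK - Vstar)) / s :=
        div_pos (by linarith) hs0
      linarith
    linarith [hjen, hσKle, hlb]
  -- conclude via compactness + FIP
  have hclosed : ∀ i : {β // β ∈ At}, IsClosed {σ | v i.1 σ ≤ Vstar} :=
    fun i => isClosed_le (hvαcont i.1) continuous_const
  obtain ⟨σhat, hσhatK, hσhatI⟩ :=
    hKcomp.inter_iInter_nonempty (fun i : {β // β ∈ At} => {σ | v i.1 σ ≤ Vstar})
      hclosed hfin
  refine ⟨αstar, hαstarAt, σhat, hKT hσhatK, hσhatK.1, hσhatK.2, ?_⟩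
  intro β hβ
  have h1 : v β σhat ≤ Vstar := Set.mem_iInter.1 hσhatI ⟨β, hβ⟩
  have h2 : v αstar σhat = Vstar := hσhatK.2
  rw [h2]
  exact h1
end

section
/- In a principal-agent problem, let α* ∈ argmax_{α ∈ A} V(α). If V is continuous at α*, then the principal has stable preferred strategies at α*: there exists ε > 0 such that for every α ∈ A with ‖α − α*‖ < ε there exists σ ∈ BR(α) with v(α*, σ) = V*. -/
set_option linter.unusedSectionVars false
set_option maxHeartbeats 1000000

namespace PAStable

variable {n : ℕ} {S : Type} [Fintype S] [DecidableEq S]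

/-- The pure strategy profile corresponding to `e`. -/
def purePt (e : Fin n → S) : Fin n → S → ℝ := fun i s => if e i = s then 1 else 0

lemma purePt_mem (e : Fin n → S) : ∀ i, purePt e i ∈ stdSimplex ℝ S := by
  intro i
  constructor
  · intro s; unfold purePt; split <;> norm_num
  · simp [purePt]

/-- Decomposition weights. -/
def wt (σ : Fin n → S → ℝ) (e : Fin n → S) : ℝ := ∏ i, σ i (e i)

lemma wt_nonneg {σ : Fin n → S → ℝ} (hσ : ∀ i, σ i ∈ stdSimplex ℝ S) (e : Fin n → S) :
    0 ≤ wt σ e :=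
  Finset.prod_nonneg fun i _ => (hσ i).1 _

lemma wt_sum {σ : Fin n → S → ℝ} (hσ : ∀ i, σ i ∈ stdSimplex ℝ S) :
    ∑ e : Fin n → S, wt σ e = 1 := by
  have := Finset.prod_univ_sum (fun _ : Fin n => (Finset.univ : Finset S))
    (fun i s => σ i s)
  rw [Fintype.piFinset_univ] at this
  simp only [wt]
  rw [← this]
  simp only [(fun i => (hσ i).2 : ∀ i, ∑ s, σ i s = 1)]
  simp

lemma wt_decomp {σ : Fin n → S → ℝ} (hσ : ∀ i, σ i ∈ stdSimplex ℝ S) :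
    ∑ e : Fin n → S, wt σ e • purePt e = σ := by
  funext i s
  rw [Finset.sum_apply, Finset.sum_apply]
  have key : ∀ e : Fin n → S, (wt σ e • purePt e) i s
      = ∏ j, (if j = i then (if (e j : S) = s then σ i s else 0) else σ j (e j)) := by
    intro e
    simp only [Pi.smul_apply, smul_eq_mul, wt, purePt]
    by_cases h : e i = s
    · rw [if_pos h, mul_one]
      apply Finset.prod_congr rfl
      intro j _
      by_cases hj : j = i
      · subst hj; rw [if_pos rfl, if_pos h, h]
      · rw [if_neg hj]
    · rw [if_neg h, mul_zero]
      refine (Finset.prod_eq_zero (Finset.mem_univ i) ?_).symm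
      rw [if_pos rfl, if_neg h]
  simp only [key]
  have := Finset.prod_univ_sum (fun _ : Fin n => (Finset.univ : Finset S))
    (fun j t => if j = i then (if (t : S) = s then σ i s else 0) else σ j t)
  rw [Fintype.piFinset_univ] at this
  rw [← this]
  have step : ∀ j : Fin n, (∑ t : S, if j = i then (if t = s then σ i s else 0) else σ j t)
      = if j = i then σ i s else 1 := by
    intro j
    by_cases hj : j = i
    · simp [hj]
    · simp [hj, (hσ j).2]
  simp only [step]
  simp

lemma map_sum_eq {C : Set (Fin n → S → ℝ)} (hC : Convex ℝ C)
    {f : (Fin n → S → ℝ) → ℝ}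
    (haff : ∀ σ₁ ∈ C, ∀ σ₂ ∈ C, ∀ t : ℝ, 0 ≤ t → t ≤ 1 →
      f ((1 - t) • σ₁ + t • σ₂) = (1 - t) * f σ₁ + t * f σ₂)
    {ι : Type*} (tfin : Finset ι) (w : ι → ℝ) (z : ι → Fin n → S → ℝ)
    (h0 : ∀ i ∈ tfin, 0 ≤ w i) (h1 : ∑ i ∈ tfin, w i = 1) (hz : ∀ i ∈ tfin, z i ∈ C) :
    f (∑ i ∈ tfin, w i • z i) = ∑ i ∈ tfin, w i * f (z i) := by
  have key : ∀ x ∈ C, ∀ y ∈ C, ∀ a b : ℝ, 0 ≤ a → 0 ≤ b → a + b = 1 →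
      f (a • x + b • y) = a * f x + b * f y := by
    intro x hx y hy a b ha hb hab
    have h := haff x hx y hy b hb (by linarith)
    have hab' : (1 : ℝ) - b = a := by linarith
    rw [hab'] at h
    exact h
  have hcv : ConvexOn ℝ C f :=
    ⟨hC, fun x hx y hy a b ha hb hab => by
      rw [smul_eq_mul, smul_eq_mul, key x hx y hy a b ha hb hab]⟩
  have hcc : ConcaveOn ℝ C f :=
    ⟨hC, fun x hx y hy a b ha hb hab => by
      rw [smul_eq_mul, smul_eq_mul, key x hx y hy a b ha hb hab]⟩
  refine le_antisymm ?_ ?_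
  · simpa [smul_eq_mul] using hcv.map_sum_le h0 h1 hz
  · simpa [smul_eq_mul] using hcc.le_map_sum h0 h1 hz

end PAStable

open PAStable in
/-- In a principal-agent problem, if the value function `V` is
continuous at the optimal mechanism `α*`, then the principal has stable
preferred strategies at `α*`. -/
theorem continuity_of_value_implies_stable_preferred_strategies
    {k n : ℕ} {S : Type} [Fintype S] [Nonempty S]
    (A : Set (EuclideanSpace ℝ (Fin k)))
    (hAne : A.Nonempty) (hAcomp : IsCompact A) (hAconv : Convex ℝ A)
    -- Σ = (Δ(S))ⁿ
    (Sig : Set (Fin n → S → ℝ))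
    (hSig : Sig = {σ | ∀ i, σ i ∈ stdSimplex ℝ S})
    -- u and v : jointly continuous and affine in the second argument
    (u v : EuclideanSpace ℝ (Fin k) → (Fin n → S → ℝ) → ℝ)
    (hucont : Continuous fun p : EuclideanSpace ℝ (Fin k) × (Fin n → S → ℝ) =>
      u p.1 p.2)
    (hvcont : Continuous fun p : EuclideanSpace ℝ (Fin k) × (Fin n → S → ℝ) =>
      v p.1 p.2)
    (huaff : ∀ α, ∀ σ₁ ∈ Sig, ∀ σ₂ ∈ Sig, ∀ t : ℝ, 0 ≤ t → t ≤ 1 →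
      u α ((1 - t) • σ₁ + t • σ₂) = (1 - t) * u α σ₁ + t * u α σ₂)
    (hvaff : ∀ α, ∀ σ₁ ∈ Sig, ∀ σ₂ ∈ Sig, ∀ t : ℝ, 0 ≤ t → t ≤ 1 →
      v α ((1 - t) • σ₁ + t • σ₂) = (1 - t) * v α σ₁ + t * v α σ₂)
    -- the agent's best-reply correspondence
    (BR : EuclideanSpace ℝ (Fin k) → Set (Fin n → S → ℝ))
    (hBR : ∀ α, BR α = {σ | σ ∈ Sig ∧ ∀ σ' ∈ Sig, u α σ' ≤ u α σ})
    -- the principal's value V(α) = max_{σ ∈ BR(α)} v(α, σ), V* = max_{α ∈ A} V(α)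
    (V : EuclideanSpace ℝ (Fin k) → ℝ)
    (hV : ∀ α ∈ A, IsGreatest ((fun σ => v α σ) '' BR α) (V α))
    (Vstar : ℝ)
    (hVstar : IsGreatest (V '' A) Vstar)
    -- α* is an optimal mechanism and V is continuous at α*
    (αstar : EuclideanSpace ℝ (Fin k))
    (hαstarA : αstar ∈ A)
    (hαstaropt : V αstar = Vstar)
    (hVcont : ContinuousWithinAt V A αstar) :
    ∃ ε > (0 : ℝ), ∀ α ∈ A, ‖α - αstar‖ < ε → ∃ σ ∈ BR α, v αstar σ = Vstar := by
  classical
  -- basic structural facts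
  have hSigconv : Convex ℝ Sig := by
    rw [hSig]
    intro σ₁ h1 σ₂ h2 a b ha hb hab i
    simpa using (convex_stdSimplex ℝ S) (h1 i) (h2 i) ha hb hab
  have hpureSig : ∀ e : Fin n → S, purePt e ∈ Sig := by
    intro e; rw [hSig]; exact purePt_mem e
  have hSigmem : ∀ σ ∈ Sig, ∀ i, σ i ∈ stdSimplex ℝ S := by
    intro σ h; rw [hSig] at h; exact h
  -- decompositions of u and v values
  have hudec : ∀ α, ∀ σ ∈ Sig,
      u α σ = ∑ e : Fin n → S, wt σ e * u α (purePt e) := by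
    intro α σ hσ
    have hσ' := hSigmem σ hσ
    conv_lhs => rw [← wt_decomp hσ']
    exact map_sum_eq hSigconv (huaff α) _ _ _ (fun e _ => wt_nonneg hσ' e)
      (by simpa using wt_sum hσ') (fun e _ => hpureSig e)
  have hvdec : ∀ α, ∀ σ ∈ Sig,
      v α σ = ∑ e : Fin n → S, wt σ e * v α (purePt e) := by
    intro α σ hσ
    have hσ' := hSigmem σ hσ
    conv_lhs => rw [← wt_decomp hσ']
    exact map_sum_eq hSigconv (hvaff α) _ _ _ (fun e _ => wt_nonneg hσ' e)
      (by simpa using wt_sum hσ') (fun e _ => hpureSig e)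
  -- positive-weight vertices of a best reply are best replies
  have fact1 : ∀ α, ∀ σ ∈ BR α, ∀ e : Fin n → S, 0 < wt σ e → purePt e ∈ BR α := by
    intro α σ hσBR e he
    rw [hBR] at hσBR ⊢
    obtain ⟨hσSig, hmax⟩ := hσBR
    have hσ' := hSigmem σ hσSig
    refine ⟨hpureSig e, fun σ' hσ'' => le_trans (hmax σ' hσ'') ?_⟩
    by_contra hlt
    push_neg at hlt
    have hstrict : ∑ e' : Fin n → S, wt σ e' * u α (purePt e')
        < ∑ e' : Fin n → S, wt σ e' * u α σ := by
      apply Finset.sum_lt_sum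
      · intro e' _
        rcases (wt_nonneg hσ' e').lt_or_eq with hpos | heq
        · exact mul_le_mul_of_nonneg_left (hmax _ (hpureSig e')) (le_of_lt hpos)
        · rw [← heq]; simp
      · exact ⟨e, Finset.mem_univ e, by
          exact mul_lt_mul_of_pos_left hlt he⟩
    rw [← hudec α σ hσSig, ← Finset.sum_mul, wt_sum hσ', one_mul] at hstrict
    exact lt_irrefl _ hstrict
  -- some positive-weight vertex has v-value at least that of σ
  have fact2 : ∀ α, ∀ σ ∈ Sig, ∃ e : Fin n → S, 0 < wt σ e ∧ v α σ ≤ v α (purePt e) := by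
    intro α σ hσ
    have hσ' := hSigmem σ hσ
    by_contra h
    push_neg at h
    have hex : ∃ e : Fin n → S, 0 < wt σ e := by
      by_contra h'
      push_neg at h'
      have h1 : (1 : ℝ) ≤ 0 := (wt_sum hσ') ▸ Finset.sum_nonpos (fun e _ => h' e)
      linarith
    obtain ⟨e₀, he₀⟩ := hex
    have hstrict : ∑ e : Fin n → S, wt σ e * v α (purePt e)
        < ∑ e : Fin n → S, wt σ e * v α σ := by
      apply Finset.sum_lt_sum
      · intro e' _
        rcases (wt_nonneg hσ' e').lt_or_eq with hpos | heq
        · exact mul_le_mul_of_nonneg_left (le_of_lt (h e' hpos)) (le_of_lt hpos)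
        · rw [← heq]; simp
      · exact ⟨e₀, Finset.mem_univ e₀, mul_lt_mul_of_pos_left (h e₀ he₀) he₀⟩
    rw [← hvdec α σ hσ, ← Finset.sum_mul, wt_sum hσ', one_mul] at hstrict
    exact lt_irrefl _ hstrict
  -- the finite set of pure best replies
  set 𝒯 : EuclideanSpace ℝ (Fin k) → Finset (Fin n → S) :=
    fun α => Finset.univ.filter (fun e => purePt e ∈ BR α) with h𝒯
  have h𝒯mem : ∀ α, ∀ e : Fin n → S, e ∈ 𝒯 α ↔ purePt e ∈ BR α := by
    intro α e; simp [h𝒯]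
  have fact3a : ∀ α ∈ A, ∃ e ∈ 𝒯 α, V α ≤ v α (purePt e) := by
    intro α hA
    obtain ⟨σ, hσBR, hσv⟩ := (hV α hA).1
    have hσSig : σ ∈ Sig := by
      have := hσBR; rw [hBR] at this; exact this.1
    obtain ⟨e, hwe, hle⟩ := fact2 α σ hσSig
    exact ⟨e, (h𝒯mem α e).mpr (fact1 α σ hσBR e hwe), hσv ▸ hle⟩
  have fact3b : ∀ α ∈ A, ∀ e ∈ 𝒯 α, v α (purePt e) ≤ V α := by
    intro α hA e he
    exact (hV α hA).2 ⟨purePt e, (h𝒯mem α e).mp he, rfl⟩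
  -- the key per-T stability statement
  have keyT : ∀ Tf : Finset (Fin n → S), ∃ ε > (0 : ℝ), ∀ α ∈ A, ‖α - αstar‖ < ε →
      𝒯 α = Tf → ∃ σ ∈ BR α, v αstar σ = Vstar := by
    intro Tf
    by_cases hgood : ∃ e ∈ Tf, v αstar (purePt e) = Vstar
    · obtain ⟨e, heTf, hev⟩ := hgood
      exact ⟨1, one_pos, fun α hA _ hT =>
        ⟨purePt e, (h𝒯mem α e).mp (hT ▸ heTf), hev⟩⟩
    · by_cases hne : Tf.Nonempty
      · push_neg at hgood
        obtain ⟨e₀, he₀, hMe⟩ := Finset.exists_mem_eq_sup' hne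
          (fun e => v αstar (purePt e))
        set M := Tf.sup' hne (fun e => v αstar (purePt e)) with hM
        have hMne : M ≠ Vstar := by rw [hMe]; exact hgood e₀ he₀
        set δ := |M - Vstar| with hδdef
        have hδpos : 0 < δ := abs_pos.mpr (sub_ne_zero.mpr hMne)
        have hWcont : ContinuousAt
            (fun α => Tf.sup' hne (fun e => v α (purePt e))) αstar := by
          apply ContinuousAt.finset_sup'_apply hne
          intro e _
          exact (hvcont.comp (continuous_id.prodMk continuous_const)).continuousAt
        rw [Metric.continuousAt_iff] at hWcont
        obtain ⟨ε₁, hε₁pos, hε₁⟩ := hWcont (δ / 2) (by linarith)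
        have hVc := hVcont
        rw [Metric.continuousWithinAt_iff] at hVc
        obtain ⟨ε₂, hε₂pos, hε₂⟩ := hVc (δ / 2) (by linarith)
        refine ⟨min ε₁ ε₂, lt_min hε₁pos hε₂pos, ?_⟩
        intro α hA hd hT
        exfalso
        have hdist : dist α αstar < ε₁ ∧ dist α αstar < ε₂ := by
          rw [dist_eq_norm]
          exact ⟨lt_of_lt_of_le hd (min_le_left _ _), lt_of_lt_of_le hd (min_le_right _ _)⟩
        have h1 := hε₁ hdist.1
        have h2 := hε₂ hA hdist.2
        have hVW : V α = Tf.sup' hne (fun e => v α (purePt e)) := by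
          apply le_antisymm
          · obtain ⟨e, heT, hle⟩ := fact3a α hA
            rw [hT] at heT
            exact le_trans hle (Finset.le_sup' (fun e => v α (purePt e)) heT)
          · apply Finset.sup'_le
            intro e heTf
            exact fact3b α hA e (hT ▸ heTf)
        rw [Real.dist_eq, hαstaropt] at h2
        rw [Real.dist_eq, ← hVW, ← hM] at h1
        have habs : |M - Vstar| ≤ |V α - M| + |V α - Vstar| := by
          have := abs_sub (V α - M) (V α - Vstar)
          calc |M - Vstar| = |(V α - Vstar) - (V α - M)| := by ring_nf
            _ ≤ |V α - Vstar| + |V α - M| := abs_sub _ _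
            _ = |V α - M| + |V α - Vstar| := by ring
        have : δ < δ := by
          calc δ = |M - Vstar| := hδdef
            _ ≤ |V α - M| + |V α - Vstar| := habs
            _ < δ / 2 + δ / 2 := add_lt_add h1 h2
            _ = δ := by ring
        exact lt_irrefl _ this
      · refine ⟨1, one_pos, fun α hA _ hT => ?_⟩
        exfalso
        obtain ⟨e, he, _⟩ := fact3a α hA
        rw [hT] at he
        exact hne ⟨e, he⟩
  -- assemble: take the minimum ε over all finitely many possible values of 𝒯
  choose ε hεpos hεkey using keyT
  have hne' : (Finset.univ : Finset (Finset (Fin n → S))).Nonempty :=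
    ⟨∅, Finset.mem_univ ∅⟩
  refine ⟨Finset.univ.inf' hne' ε, (Finset.lt_inf'_iff hne').mpr (fun T _ => hεpos T), ?_⟩
  intro α hA hd
  exact hεkey (𝒯 α) α hA
    (lt_of_lt_of_le hd (Finset.inf'_le _ (Finset.mem_univ _))) rfl
end

section
/- In a principal-agent problem, let α ∈ A. If v(α, σ) = V(α) for all σ ∈ BR(α) (the game is aligned at α), then V is continuous at α. -/
/-- If the game is aligned at `α` (the principal is indifferent
across all best replies of the agent at `α`), then the value function `V` is
continuous at `α`. -/
theorem aligned_implies_value_continuous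
    {k n : ℕ} {S : Type} [Fintype S] [Nonempty S]
    (A : Set (EuclideanSpace ℝ (Fin k)))
    (hAne : A.Nonempty) (hAcomp : IsCompact A) (hAconv : Convex ℝ A)
    -- Σ = (Δ(S))ⁿ
    (Sig : Set (Fin n → S → ℝ))
    (hSig : Sig = {σ | ∀ i, σ i ∈ stdSimplex ℝ S})
    -- u and v : jointly continuous and affine in the second argument
    (u v : EuclideanSpace ℝ (Fin k) → (Fin n → S → ℝ) → ℝ)
    (hucont : Continuous fun p : EuclideanSpace ℝ (Fin k) × (Fin n → S → ℝ) =>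
      u p.1 p.2)
    (hvcont : Continuous fun p : EuclideanSpace ℝ (Fin k) × (Fin n → S → ℝ) =>
      v p.1 p.2)
    (huaff : ∀ α, ∀ σ₁ ∈ Sig, ∀ σ₂ ∈ Sig, ∀ t : ℝ, 0 ≤ t → t ≤ 1 →
      u α ((1 - t) • σ₁ + t • σ₂) = (1 - t) * u α σ₁ + t * u α σ₂)
    (hvaff : ∀ α, ∀ σ₁ ∈ Sig, ∀ σ₂ ∈ Sig, ∀ t : ℝ, 0 ≤ t → t ≤ 1 →
      v α ((1 - t) • σ₁ + t • σ₂) = (1 - t) * v α σ₁ + t * v α σ₂)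
    -- the agent's best-reply correspondence
    (BR : EuclideanSpace ℝ (Fin k) → Set (Fin n → S → ℝ))
    (hBR : ∀ α, BR α = {σ | σ ∈ Sig ∧ ∀ σ' ∈ Sig, u α σ' ≤ u α σ})
    -- the principal's value V(α) = max_{σ ∈ BR(α)} v(α, σ)
    (V : EuclideanSpace ℝ (Fin k) → ℝ)
    (hV : ∀ α ∈ A, IsGreatest ((fun σ => v α σ) '' BR α) (V α))
    -- the game is aligned at α
    (α : EuclideanSpace ℝ (Fin k))
    (hαA : α ∈ A)
    (haligned : ∀ σ ∈ BR α, v α σ = V α) :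
    ContinuousWithinAt V A α := by
  classical
  have hSigcomp : IsCompact Sig := by
    have h : Sig = Set.pi Set.univ (fun _ : Fin n => stdSimplex ℝ S) := by
      rw [hSig]; ext σ; simp [Set.mem_pi]
    rw [h]
    exact isCompact_univ_pi (fun _ => isCompact_stdSimplex ℝ S)
  rw [Metric.continuousWithinAt_iff]
  by_contra hc
  push_neg at hc
  obtain ⟨ε, hε, hcon⟩ := hc
  have hseq : ∀ m : ℕ, ∃ yy ∈ A, dist yy α < 1 / (m + 1) ∧ ε ≤ dist (V yy) (V α) := by
    intro m
    obtain ⟨yy, hyA, hy1, hy2⟩ := hcon (1 / (m + 1)) (by positivity)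
    exact ⟨yy, hyA, hy1, hy2⟩
  choose y hyA hyd hyV using hseq
  have hyx : Filter.Tendsto y Filter.atTop (nhds α) := by
    rw [tendsto_iff_dist_tendsto_zero]
    apply squeeze_zero (fun m => dist_nonneg) (fun m => le_of_lt (hyd m))
    exact tendsto_one_div_add_atTop_nhds_zero_nat
  have hmax : ∀ m, ∃ σ ∈ BR (y m), v (y m) σ = V (y m) := by
    intro m
    obtain ⟨σ, hσ, hvσ⟩ := (hV (y m) (hyA m)).1
    exact ⟨σ, hσ, hvσ⟩
  choose σ hσBR hσv using hmax
  have hσSig : ∀ m, σ m ∈ Sig := by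
    intro m
    have h := hσBR m
    rw [hBR] at h
    exact h.1
  obtain ⟨σ', hσ'Sig, φ, hφ, hφtend⟩ := hSigcomp.tendsto_subseq hσSig
  have hyφ : Filter.Tendsto (fun m => y (φ m)) Filter.atTop (nhds α) :=
    hyx.comp hφ.tendsto_atTop
  have hφtend' : Filter.Tendsto (fun m => σ (φ m)) Filter.atTop (nhds σ') := hφtend
  have hσ'BR : σ' ∈ BR α := by
    rw [hBR]
    refine ⟨hσ'Sig, fun τ hτ => ?_⟩
    have h1 : Filter.Tendsto (fun m => u (y (φ m)) τ) Filter.atTop (nhds (u α τ)) :=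
      (hucont.tendsto (α, τ)).comp (hyφ.prodMk_nhds tendsto_const_nhds)
    have h2 : Filter.Tendsto (fun m => u (y (φ m)) (σ (φ m))) Filter.atTop
        (nhds (u α σ')) :=
      (hucont.tendsto (α, σ')).comp (hyφ.prodMk_nhds hφtend')
    refine le_of_tendsto_of_tendsto' h1 h2 (fun m => ?_)
    have h := hσBR (φ m)
    rw [hBR] at h
    exact h.2 τ hτ
  have hv : Filter.Tendsto (fun m => v (y (φ m)) (σ (φ m))) Filter.atTop
      (nhds (V α)) := by
    have h := (hvcont.tendsto (α, σ')).comp (hyφ.prodMk_nhds hφtend')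
    rwa [haligned σ' hσ'BR] at h
  have hVtend : Filter.Tendsto (fun m => V (y (φ m))) Filter.atTop (nhds (V α)) := by
    simpa only [hσv] using hv
  have hev := (Metric.tendsto_nhds.mp hVtend) ε hε
  obtain ⟨m, hm⟩ := hev.exists
  exact absurd hm (not_lt.mpr (hyV (φ m)))
end

section
/- In a principal-agent problem, for every α ∈ A there exists ε > 0 such that BR(α') ⊆ BR(α) for all α' ∈ A with ‖α' − α‖ < ε. -/
/-- In a principal-agent problem, for every `α ∈ A` there is an
`ε > 0` such that `BR(α') ⊆ BR(α)` for all `α' ∈ A` with `‖α' − α‖ < ε`. -/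
theorem best_replies_locally_shrink
    {k n : ℕ} {S : Type} [Fintype S] [Nonempty S]
    (A : Set (EuclideanSpace ℝ (Fin k)))
    (hAne : A.Nonempty) (hAcomp : IsCompact A) (hAconv : Convex ℝ A)
    -- Σ = (Δ(S))ⁿ
    (Sig : Set (Fin n → S → ℝ))
    (hSig : Sig = {σ | ∀ i, σ i ∈ stdSimplex ℝ S})
    -- u : jointly continuous and affine in the second argument
    (u : EuclideanSpace ℝ (Fin k) → (Fin n → S → ℝ) → ℝ)
    (hucont : Continuous fun p : EuclideanSpace ℝ (Fin k) × (Fin n → S → ℝ) =>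
      u p.1 p.2)
    (huaff : ∀ α, ∀ σ₁ ∈ Sig, ∀ σ₂ ∈ Sig, ∀ t : ℝ, 0 ≤ t → t ≤ 1 →
      u α ((1 - t) • σ₁ + t • σ₂) = (1 - t) * u α σ₁ + t * u α σ₂)
    -- the agent's best-reply correspondence
    (BR : EuclideanSpace ℝ (Fin k) → Set (Fin n → S → ℝ))
    (hBR : ∀ α, BR α = {σ | σ ∈ Sig ∧ ∀ σ' ∈ Sig, u α σ' ≤ u α σ})
    (α : EuclideanSpace ℝ (Fin k)) (hαA : α ∈ A) :
    ∃ ε > (0 : ℝ), ∀ α' ∈ A, ‖α' - α‖ < ε → BR α' ⊆ BR α := by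
  classical
  -- the (finite) set of vertices of Σ
  set E : Set (Fin n → S → ℝ) :=
    Set.univ.pi (fun _ : Fin n => Set.range fun s s' : S => if s = s' then (1 : ℝ) else 0)
    with hE
  have hEfin : E.Finite := Set.Finite.pi fun _ => Set.finite_range _
  have hpi : Sig = Set.univ.pi (fun _ : Fin n => stdSimplex ℝ S) := by
    rw [hSig]; ext σ; simp [Set.mem_pi]
  have hconv : convexHull ℝ E = Sig := by
    rw [hE, convexHull_pi, hpi]
    simp only [convexHull_basis_eq_stdSimplex]
  have hESig : E ⊆ Sig := hconv ▸ subset_convexHull ℝ E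
  have hSigconv : Convex ℝ Sig := hconv ▸ convex_convexHull ℝ E
  -- `u β` is both convex and concave on Σ
  have hcvx : ∀ β, ConvexOn ℝ Sig (u β) := by
    intro β
    refine ⟨hSigconv, fun x hx y hy a b ha hb hab => ?_⟩
    have hab' : 1 - b = a := by linarith
    have := huaff β x hx y hy b hb (by linarith)
    rw [hab'] at this
    exact le_of_eq this
  have hccv : ∀ β, ConcaveOn ℝ Sig (u β) := by
    intro β
    refine ⟨hSigconv, fun x hx y hy a b ha hb hab => ?_⟩
    have hab' : 1 - b = a := by linarith
    have := huaff β x hx y hy b hb (by linarith)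
    rw [hab'] at this
    exact ge_of_eq this
  -- affinity for center of mass
  have haff : ∀ β {ι : Type} (t : Finset ι) (w : ι → ℝ) (z : ι → (Fin n → S → ℝ)),
      (∀ j ∈ t, 0 ≤ w j) → (∑ j ∈ t, w j) = 1 → (∀ j ∈ t, z j ∈ Sig) →
      u β (t.centerMass w z) = ∑ j ∈ t, w j * u β (z j) := by
    intro β ι t w z hw0 hw1 hz
    have h1 : (0:ℝ) < ∑ j ∈ t, w j := by rw [hw1]; norm_num
    have hle := (hcvx β).map_centerMass_le hw0 h1 hz
    have hge := (hccv β).le_map_centerMass hw0 h1 hz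
    have hcm : t.centerMass w (u β ∘ z) = ∑ j ∈ t, w j * u β (z j) := by
      rw [Finset.centerMass, hw1, inv_one, one_smul]
      simp [Finset.smul_sum, smul_eq_mul]
    rw [hcm] at hle hge
    exact le_antisymm hle hge
  -- decomposition of elements of Σ
  have hdec : ∀ σ ∈ Sig, ∃ (ι : Type) (t : Finset ι) (w : ι → ℝ) (z : ι → (Fin n → S → ℝ)),
      (∀ j ∈ t, 0 ≤ w j) ∧ (∑ j ∈ t, w j) = 1 ∧ (∀ j ∈ t, z j ∈ E) ∧
      t.centerMass w z = σ := by
    intro σ hσ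
    rw [← hconv, convexHull_eq] at hσ
    exact hσ
  -- a vertex maximizer for α
  set Ef : Finset (Fin n → S → ℝ) := hEfin.toFinset with hEf
  have hEfne : Ef.Nonempty := by
    refine ⟨fun _ s' => if Classical.arbitrary S = s' then (1:ℝ) else 0, ?_⟩
    rw [hEf, Set.Finite.mem_toFinset, hE]
    intro i _
    exact ⟨Classical.arbitrary S, rfl⟩
  obtain ⟨e₀, he₀E, he₀max⟩ := Finset.exists_max_image Ef (u α) hEfne
  -- bounding u β σ by vertex values
  have hbound : ∀ β (b : ℝ), (∀ e ∈ Ef, u β e ≤ b) → ∀ σ ∈ Sig, u β σ ≤ b := by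
    intro β b hb σ hσ
    obtain ⟨ι, t, w, z, hw0, hw1, hz, hcm⟩ := hdec σ hσ
    have := haff β t w z hw0 hw1 (fun j hj => hESig (hz j hj))
    rw [hcm] at this
    rw [this]
    calc ∑ j ∈ t, w j * u β (z j) ≤ ∑ j ∈ t, w j * b := by
          refine Finset.sum_le_sum fun j hj => ?_
          exact mul_le_mul_of_nonneg_left
            (hb _ (by rw [hEf, Set.Finite.mem_toFinset]; exact hz j hj)) (hw0 j hj)
      _ = b := by rw [← Finset.sum_mul, hw1, one_mul]
  -- choose ε so that every strict loser at α stays a strict loser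
  have hev : ∀ᶠ β in nhds α, ∀ e ∈ Ef, u α e < u α e₀ → u β e < u β e₀ := by
    rw [Filter.eventually_all_finset]
    intro e _
    by_cases hlt : u α e < u α e₀
    · have hc : Continuous fun β => u β e₀ - u β e := by
        have h1 : Continuous fun β => u β e₀ :=
          hucont.comp (continuous_id.prodMk continuous_const)
        have h2 : Continuous fun β => u β e :=
          hucont.comp (continuous_id.prodMk continuous_const)
        exact h1.sub h2
      have h0 : (0:ℝ) < u α e₀ - u α e := by linarith
      have := (hc.continuousAt (x := α)) (lt_mem_nhds h0)
      filter_upwards [this] with β hβ _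
      have : (0:ℝ) < u β e₀ - u β e := hβ
      linarith
    · filter_upwards with β hβ
      exact absurd hβ hlt
  rw [Metric.eventually_nhds_iff] at hev
  obtain ⟨ε, hε, hball⟩ := hev
  refine ⟨ε, hε, fun α' _ hα' σ hσ => ?_⟩
  have hnear : ∀ e ∈ Ef, u α e < u α e₀ → u α' e < u α' e₀ := by
    apply hball
    rwa [dist_eq_norm]
  rw [hBR α'] at hσ
  obtain ⟨hσSig, hσmax⟩ := hσ
  -- u α' σ dominates all vertex values, in particular u α' e₀
  have he₀Sig : e₀ ∈ Sig := hESig (by rwa [← Set.Finite.mem_toFinset hEfin])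
  have hσe₀ : u α' e₀ ≤ u α' σ := hσmax e₀ he₀Sig
  -- decompose σ
  obtain ⟨ι, t, w, z, hw0, hw1, hz, hcm⟩ := hdec σ hσSig
  have hzSig : ∀ j ∈ t, z j ∈ Sig := fun j hj => hESig (hz j hj)
  have hzEf : ∀ j ∈ t, z j ∈ Ef := fun j hj => by
    rw [hEf, Set.Finite.mem_toFinset]; exact hz j hj
  have heval' : u α' σ = ∑ j ∈ t, w j * u α' (z j) := by
    rw [← hcm]; exact haff α' t w z hw0 hw1 hzSig
  -- every vertex with positive weight is a maximizer at α
  have hkey : ∀ j ∈ t, w j ≠ 0 → u α (z j) = u α e₀ := by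
    intro j hj hwj
    by_contra hne
    have hlt : u α (z j) < u α e₀ := lt_of_le_of_ne (he₀max _ (hzEf j hj)) hne
    have hlt' : u α' (z j) < u α' e₀ := hnear _ (hzEf j hj) hlt
    -- then ∑ w * u α' z < u α' σ, contradiction
    have hub : ∀ i ∈ t, w i * u α' (z i) ≤ w i * u α' σ := fun i hi =>
      mul_le_mul_of_nonneg_left (hσmax _ (hzSig i hi)) (hw0 i hi)
    have hwjpos : 0 < w j := lt_of_le_of_ne (hw0 j hj) (Ne.symm hwj)
    have hstr : w j * u α' (z j) < w j * u α' σ := by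
      refine mul_lt_mul_of_pos_left ?_ hwjpos
      exact lt_of_lt_of_le hlt' hσe₀
    have : ∑ i ∈ t, w i * u α' (z i) < ∑ i ∈ t, w i * u α' σ :=
      Finset.sum_lt_sum hub ⟨j, hj, hstr⟩
    rw [← Finset.sum_mul, hw1, one_mul, ← heval'] at this
    exact lt_irrefl _ this
  -- hence u α σ = u α e₀
  have heval : u α σ = u α e₀ := by
    rw [← hcm, haff α t w z hw0 hw1 hzSig]
    have : ∀ j ∈ t, w j * u α (z j) = w j * u α e₀ := by
      intro j hj
      by_cases hwj : w j = 0
      · rw [hwj, zero_mul, zero_mul]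
      · rw [hkey j hj hwj]
    rw [Finset.sum_congr rfl this, ← Finset.sum_mul, hw1, one_mul]
  rw [hBR α]
  refine ⟨hσSig, fun σ' hσ' => ?_⟩
  rw [heval]
  exact hbound α (u α e₀) he₀max σ' hσ'
end

section
/- In a principal-agent problem in which v is additionally concave in its first argument, suppose V is continuous at some α* ∈ argmax_{α ∈ A} V(α). Then there is no value of commitment: there exist α̂ ∈ A and σ̂ ∈ BR(α̂) such that v(α̂, σ̂) = V* and v(α̂, σ̂) ≥ v(α, σ̂) for all α ∈ A. -/
open Filter Topology
open scoped Classical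

namespace NoCommitAux

variable {n : ℕ} {S : Type} [Fintype S] [Nonempty S]

/-- The pure strategy profile `f` as an element of `(Δ S)ⁿ`. -/
noncomputable def pureP (f : Fin n → S) : Fin n → S → ℝ :=
  fun i s => if s = f i then 1 else 0

lemma pureP_mem (f : Fin n → S) (i : Fin n) : pureP f i ∈ stdSimplex ℝ S := by
  classical
  constructor
  · intro s; unfold pureP; split <;> norm_num
  · simp [pureP]


lemma decomp (σ : Fin n → S → ℝ) (hσ : ∀ i, σ i ∈ stdSimplex ℝ S) :
    ∃ w : (Fin n → S) → ℝ, (∀ f, 0 ≤ w f) ∧ (∑ f, w f = 1) ∧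
      σ = ∑ f, w f • pureP f := by
  classical
  refine ⟨fun f => ∏ i, σ i (f i), fun f => Finset.prod_nonneg fun i _ => (hσ i).1 _, ?_, ?_⟩
  · rw [← Fintype.prod_sum fun i (s : S) => σ i s]
    calc ∏ i, ∑ s, σ i s = ∏ i : Fin n, (1:ℝ) :=
          Finset.prod_congr rfl fun i _ => (hσ i).2
      _ = 1 := Finset.prod_const_one
  · funext i s
    have happ : (∑ f : Fin n → S, (∏ j, σ j (f j)) • pureP f) i s
        = ∑ f : Fin n → S, (∏ j, σ j (f j)) * pureP f i s := by
      rw [Finset.sum_apply, Finset.sum_apply]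
      exact Finset.sum_congr rfl fun f _ => by simp
    rw [happ]
    have hterm : ∀ f : Fin n → S, (∏ j, σ j (f j)) * pureP f i s
        = ∏ j, (if j = i then (if s = f j then σ j (f j) else 0) else σ j (f j)) := by
      intro f
      unfold pureP
      by_cases h : s = f i
      · rw [if_pos h, mul_one]
        refine Finset.prod_congr rfl fun j _ => ?_
        by_cases hj : j = i
        · subst hj; rw [if_pos rfl, if_pos h]
        · rw [if_neg hj]
      · rw [if_neg h, mul_zero]
        symm
        apply Finset.prod_eq_zero (Finset.mem_univ i)
        rw [if_pos rfl, if_neg h]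
    rw [Finset.sum_congr rfl fun f _ => hterm f]
    rw [← Fintype.prod_sum fun j (x : S) =>
      (if j = i then (if s = x then σ j x else 0) else σ j x)]
    rw [Finset.prod_eq_single i ?h1 ?h2]
    · simp
    case h1 =>
      intro j _ hj
      simp only [if_neg hj]
      exact (hσ j).2
    case h2 =>
      intro h; exact absurd (Finset.mem_univ i) h

lemma affine_comb (Sg : Set (Fin n → S → ℝ)) (φ : (Fin n → S → ℝ) → ℝ)
    (haff : ∀ σ₁ ∈ Sg, ∀ σ₂ ∈ Sg, ∀ t : ℝ, 0 ≤ t → t ≤ 1 →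
      φ ((1 - t) • σ₁ + t • σ₂) = (1 - t) * φ σ₁ + t * φ σ₂) :
    ∀ ⦃x⦄, x ∈ Sg → ∀ ⦃y⦄, y ∈ Sg → ∀ ⦃a b : ℝ⦄, 0 ≤ a → 0 ≤ b → a + b = 1 →
      φ (a • x + b • y) = a * φ x + b * φ y := by
  intro x hx y hy a b ha hb hab
  have h1 : a = 1 - b := by linarith
  have h2 : b ≤ 1 := by linarith
  rw [h1]
  exact haff x hx y hy b hb h2

lemma affine_sum (Sg : Set (Fin n → S → ℝ)) (hconv : Convex ℝ Sg)
    (φ : (Fin n → S → ℝ) → ℝ)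
    (haff : ∀ σ₁ ∈ Sg, ∀ σ₂ ∈ Sg, ∀ t : ℝ, 0 ≤ t → t ≤ 1 →
      φ ((1 - t) • σ₁ + t • σ₂) = (1 - t) * φ σ₁ + t * φ σ₂)
    {ι : Type} [Fintype ι] (w : ι → ℝ) (e : ι → (Fin n → S → ℝ))
    (hw0 : ∀ f, 0 ≤ w f) (hw1 : ∑ f, w f = 1) (he : ∀ f, e f ∈ Sg) :
    φ (∑ f, w f • e f) = ∑ f, w f * φ (e f) := by
  have key := affine_comb Sg φ haff
  have hcx : ConvexOn ℝ Sg φ :=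
    ⟨hconv, fun x hx y hy a b ha hb hab => by
      rw [smul_eq_mul, smul_eq_mul]; exact (key hx hy ha hb hab).le⟩
  have hcv : ConcaveOn ℝ Sg φ :=
    ⟨hconv, fun x hx y hy a b ha hb hab => by
      rw [smul_eq_mul, smul_eq_mul]; exact (key hx hy ha hb hab).ge⟩
  have h1 := hcx.map_sum_le (fun i _ => hw0 i) hw1 (fun i _ => he i)
  have h2 := hcv.le_map_sum (fun i _ => hw0 i) hw1 (fun i _ => he i)
  simp only [smul_eq_mul] at h1 h2
  linarith

end NoCommitAux

open NoCommitAux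

/-- In a principal-agent problem with `v` concave in the mechanism,
if the value function `V` is continuous at an optimal mechanism `α*`, the
principal does not benefit from commitment. -/
theorem no_value_of_commitment_of_continuous_value
    {k n : ℕ} {S : Type} [Fintype S] [Nonempty S]
    (A : Set (EuclideanSpace ℝ (Fin k)))
    (hAne : A.Nonempty) (hAcomp : IsCompact A) (hAconv : Convex ℝ A)
    -- Σ = (Δ(S))ⁿ
    (Sig : Set (Fin n → S → ℝ))
    (hSig : Sig = {σ | ∀ i, σ i ∈ stdSimplex ℝ S})
    -- u and v : jointly continuous and affine in the second argument
    (u v : EuclideanSpace ℝ (Fin k) → (Fin n → S → ℝ) → ℝ)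
    (hucont : Continuous fun p : EuclideanSpace ℝ (Fin k) × (Fin n → S → ℝ) =>
      u p.1 p.2)
    (hvcont : Continuous fun p : EuclideanSpace ℝ (Fin k) × (Fin n → S → ℝ) =>
      v p.1 p.2)
    (huaff : ∀ α, ∀ σ₁ ∈ Sig, ∀ σ₂ ∈ Sig, ∀ t : ℝ, 0 ≤ t → t ≤ 1 →
      u α ((1 - t) • σ₁ + t • σ₂) = (1 - t) * u α σ₁ + t * u α σ₂)
    (hvaff : ∀ α, ∀ σ₁ ∈ Sig, ∀ σ₂ ∈ Sig, ∀ t : ℝ, 0 ≤ t → t ≤ 1 →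
      v α ((1 - t) • σ₁ + t • σ₂) = (1 - t) * v α σ₁ + t * v α σ₂)
    -- the agent's best-reply correspondence
    (BR : EuclideanSpace ℝ (Fin k) → Set (Fin n → S → ℝ))
    (hBR : ∀ α, BR α = {σ | σ ∈ Sig ∧ ∀ σ' ∈ Sig, u α σ' ≤ u α σ})
    -- the principal's value V(α) = max_{σ ∈ BR(α)} v(α, σ), V* = max_{α ∈ A} V(α)
    (V : EuclideanSpace ℝ (Fin k) → ℝ)
    (hV : ∀ α ∈ A, IsGreatest ((fun σ => v α σ) '' BR α) (V α))
    (Vstar : ℝ)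
    (hVstar : IsGreatest (V '' A) Vstar)
    -- v is additionally concave in its first argument
    (hvconc : ∀ σ ∈ Sig, ConcaveOn ℝ A fun α => v α σ)
    -- α* is an optimal mechanism
    (αstar : EuclideanSpace ℝ (Fin k))
    (hαstarA : αstar ∈ A)
    (hαstaropt : V αstar = Vstar)
    (hVcont : ContinuousWithinAt V A αstar) :
    ∃ αhat ∈ A, ∃ σhat ∈ BR αhat,
      v αhat σhat = Vstar ∧ ∀ α ∈ A, v α σhat ≤ v αhat σhat := by
  classical
  -- basic facts about Sig
  have hSigmem : ∀ σ, σ ∈ Sig ↔ ∀ i, σ i ∈ stdSimplex ℝ S := by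
    intro σ; rw [hSig]; exact Iff.rfl
  have hSigConv : Convex ℝ Sig := by
    rw [hSig]
    intro x hx y hy a b ha hb hab i
    simpa using (convex_stdSimplex ℝ S) (hx i) (hy i) ha hb hab
  have hSigCompact : IsCompact Sig := by
    have h1 : Sig = Set.pi Set.univ fun _ : Fin n => stdSimplex ℝ S := by
      rw [hSig]; ext σ; simp [Set.mem_pi]
    rw [h1]
    exact isCompact_univ_pi fun _ => isCompact_stdSimplex ℝ S
  have hpureSig : ∀ f : Fin n → S, pureP f ∈ Sig := by
    intro f; rw [hSigmem]; exact fun i => pureP_mem f i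
  have hBRsubSig : ∀ α, BR α ⊆ Sig := by
    intro α σ hσ; rw [hBR] at hσ; exact hσ.1
  -- continuity of u, v in the second argument
  have hu_c : ∀ α, Continuous fun σ => u α σ :=
    fun α => hucont.comp (Continuous.prodMk_right α)
  have hv_c : ∀ α, Continuous fun σ => v α σ :=
    fun α => hvcont.comp (Continuous.prodMk_right α)
  -- evaluation of u, v on convex combinations
  have hu_eval : ∀ α, ∀ {ι : Type} [Fintype ι] (w : ι → ℝ) (e : ι → (Fin n → S → ℝ)),
      (∀ f, 0 ≤ w f) → (∑ f, w f = 1) → (∀ f, e f ∈ Sig) →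
      u α (∑ f, w f • e f) = ∑ f, w f * u α (e f) := by
    intro α ι _ w e hw0 hw1 he
    exact affine_sum Sig hSigConv (u α) (huaff α) w e hw0 hw1 he
  -- best pure replies
  have hpureBR : ∀ α, ∀ f, (∀ g, u α (pureP g) ≤ u α (pureP f)) → pureP f ∈ BR α := by
    intro α f hf
    rw [hBR]
    refine ⟨hpureSig f, fun σ' hσ' => ?_⟩
    obtain ⟨w, hw0, hw1, hwrep⟩ := decomp σ' ((hSigmem σ').mp hσ')
    rw [hwrep, hu_eval α w pureP hw0 hw1 hpureSig]
    calc ∑ g, w g * u α (pureP g) ≤ ∑ g, w g * u α (pureP f) :=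
          Finset.sum_le_sum fun g _ => mul_le_mul_of_nonneg_left (hf g) (hw0 g)
      _ = u α (pureP f) := by rw [← Finset.sum_mul, hw1, one_mul]
  -- BR is convex
  have hBRconv : ∀ α, Convex ℝ (BR α) := by
    intro α
    rw [hBR]
    intro x hx y hy a b ha hb hab
    refine ⟨hSigConv hx.1 hy.1 ha hb hab, fun σ' hσ' => ?_⟩
    rw [affine_comb Sig (u α) (huaff α) hx.1 hy.1 ha hb hab]
    calc u α σ' = a * u α σ' + b * u α σ' := by rw [← add_mul, hab, one_mul]
      _ ≤ a * u α x + b * u α y :=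
        add_le_add (mul_le_mul_of_nonneg_left (hx.2 σ' hσ') ha)
          (mul_le_mul_of_nonneg_left (hy.2 σ' hσ') hb)
  -- every best reply lies in the hull of the best pure replies
  have hBRhull : ∀ α, ∀ σ ∈ BR α,
      σ ∈ convexHull ℝ (pureP '' {f | ∀ g, u α (pureP g) ≤ u α (pureP f)}) := by
    intro α σ hσ
    have hσ' := hσ
    rw [hBR] at hσ'
    obtain ⟨hσSig, hσmax⟩ := hσ'
    obtain ⟨w, hw0, hw1, hwrep⟩ := decomp σ ((hSigmem σ).mp hσSig)
    have heval : u α σ = ∑ f, w f * u α (pureP f) := by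
      conv_lhs => rw [hwrep]
      exact hu_eval α w pureP hw0 hw1 hpureSig
    have hle : ∀ f, u α (pureP f) ≤ u α σ := fun f => hσmax _ (hpureSig f)
    have hzero : ∑ f, w f * (u α σ - u α (pureP f)) = 0 := by
      simp only [mul_sub]
      rw [Finset.sum_sub_distrib, ← heval, ← Finset.sum_mul, hw1, one_mul, sub_self]
    have hallz := (Finset.sum_eq_zero_iff_of_nonneg
      (fun f _ => mul_nonneg (hw0 f) (by linarith [hle f]))).mp hzero
    have hrep2 : σ = Finset.centerMass
        (Finset.univ.filter fun f => w f ≠ 0) w pureP := by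
      rw [Finset.centerMass_filter_ne_zero, Finset.centerMass_eq_of_sum_1 _ _ hw1, hwrep]
    rw [hrep2]
    apply Finset.centerMass_mem_convexHull
    · exact fun f _ => hw0 f
    · rw [Finset.sum_filter_ne_zero, hw1]; norm_num
    · intro f hf
      rw [Finset.mem_filter] at hf
      refine ⟨f, ?_, rfl⟩
      intro g
      have h1 : u α σ - u α (pureP f) = 0 := by
        rcases mul_eq_zero.mp (hallz f (Finset.mem_univ f)) with h | h
        · exact absurd h hf.2
        · exact h
      have h2 : u α (pureP f) = u α σ := by linarith
      rw [h2]; exact hle g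
  have hullBR : ∀ α,
      convexHull ℝ (pureP '' {f | ∀ g, u α (pureP g) ≤ u α (pureP f)}) ⊆ BR α := by
    intro α
    apply convexHull_min _ (hBRconv α)
    rintro σ ⟨f, hf, rfl⟩
    exact hpureBR α f hf
  -- ====== the per-direction lemma ======
  have hdir : ∀ d ∈ A, ∃ σh, σh ∈ BR αstar ∧ v αstar σh = Vstar ∧ v d σh ≤ Vstar := by
    intro d hdA
    set tseq : ℕ → ℝ := fun m => 1 / ((m : ℝ) + 1) with htseq
    have ht0 : ∀ m, 0 < tseq m := fun m => by positivity
    have ht1 : ∀ m, tseq m ≤ 1 := by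
      intro m
      rw [htseq]
      rw [div_le_one (by positivity)]
      have : (0:ℝ) ≤ (m:ℝ) := Nat.cast_nonneg m
      linarith
    set αseq : ℕ → EuclideanSpace ℝ (Fin k) :=
      fun m => (1 - tseq m) • αstar + tseq m • d with hαseq
    have hαseqA : ∀ m, αseq m ∈ A := fun m =>
      hAconv hαstarA hdA (by linarith [ht1 m]) (ht0 m).le (by ring)
    -- pigeonhole on the set of best pure replies
    obtain ⟨M, hMinf⟩ := Finite.exists_infinite_fiber
      (fun m => {f : Fin n → S | ∀ g, u (αseq m) (pureP g) ≤ u (αseq m) (pureP f)})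
    have hfreq : ∃ᶠ m in Filter.atTop,
        {f : Fin n → S | ∀ g, u (αseq m) (pureP g) ≤ u (αseq m) (pureP f)} = M := by
      rw [Filter.frequently_atTop]
      intro N
      obtain ⟨b, hb, hNb⟩ := (Set.infinite_coe_iff.mp hMinf).exists_gt N
      refine ⟨b, hNb.le, ?_⟩
      simpa using hb
    obtain ⟨φ, hφmono, hφ⟩ := Filter.extraction_of_frequently_atTop hfreq
    -- select optimal responses
    have hsel : ∀ j : ℕ, ∃ σ', σ' ∈ BR (αseq (φ j)) ∧
        v (αseq (φ j)) σ' = V (αseq (φ j)) := by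
      intro j
      obtain ⟨σ', h1, h2⟩ := (hV _ (hαseqA (φ j))).1
      exact ⟨σ', h1, h2⟩
    choose σseq hσBR hσv using hsel
    have hσhull : ∀ j, σseq j ∈ convexHull ℝ (pureP '' M) := by
      intro j
      have := hBRhull (αseq (φ j)) _ (hσBR j)
      rwa [hφ j] at this
    obtain ⟨σh, hσhM, ψ, hψmono, hψtend⟩ :=
      (((Set.toFinite M).image pureP).isCompact_convexHull (𝕜 := ℝ)).tendsto_subseq hσhull
    -- limits
    have httend : Filter.Tendsto (fun j => tseq (φ (ψ j))) Filter.atTop (nhds 0) := by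
      have h1 : Filter.Tendsto (φ ∘ ψ) Filter.atTop Filter.atTop :=
        (hφmono.comp hψmono).tendsto_atTop
      exact tendsto_one_div_add_atTop_nhds_zero_nat.comp h1
    have hαtend : Filter.Tendsto (fun j => αseq (φ (ψ j))) Filter.atTop (nhds αstar) := by
      have h1 : Filter.Tendsto (fun j => (1 - tseq (φ (ψ j))) • αstar + tseq (φ (ψ j)) • d)
          Filter.atTop (nhds ((1 - (0:ℝ)) • αstar + (0:ℝ) • d)) :=
        ((tendsto_const_nhds.sub httend).smul_const αstar).add (httend.smul_const d)
      simpa using h1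
    have hσtend : Filter.Tendsto (σseq ∘ ψ) Filter.atTop (nhds σh) := hψtend
    have hpair : Filter.Tendsto (fun j => (αseq (φ (ψ j)), σseq (ψ j)))
        Filter.atTop (nhds (αstar, σh)) := hαtend.prodMk_nhds hσtend
    have hvlim : Filter.Tendsto (fun j => v (αseq (φ (ψ j))) (σseq (ψ j)))
        Filter.atTop (nhds (v αstar σh)) := by
      have := (hvcont.tendsto (αstar, σh)).comp hpair
      simpa [Function.comp_def] using this
    have hVlim : Filter.Tendsto (fun j => V (αseq (φ (ψ j)))) Filter.atTop (nhds Vstar) := by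
      have h2 : Filter.Tendsto (fun j => αseq (φ (ψ j))) Filter.atTop (nhdsWithin αstar A) :=
        tendsto_nhdsWithin_iff.mpr ⟨hαtend, Filter.Eventually.of_forall fun j => hαseqA _⟩
      have h3 := hVcont.tendsto.comp h2
      rw [hαstaropt] at h3
      simpa [Function.comp_def] using h3
    have hveq : v αstar σh = Vstar := by
      have h4 : (fun j => v (αseq (φ (ψ j))) (σseq (ψ j))) = fun j => V (αseq (φ (ψ j))) :=
        funext fun j => hσv (ψ j)
      rw [h4] at hvlim
      exact tendsto_nhds_unique hvlim hVlim
    have hσhSig : σh ∈ Sig := by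
      have : convexHull ℝ (pureP '' M) ⊆ Sig :=
        convexHull_min (by rintro σ ⟨f, _, rfl⟩; exact hpureSig f) hSigConv
      exact this hσhM
    have hσhBRstar : σh ∈ BR αstar := by
      rw [hBR]
      refine ⟨hσhSig, fun σ'' hσ'' => ?_⟩
      have hu1 : Filter.Tendsto (fun j => u (αseq (φ (ψ j))) σ'')
          Filter.atTop (nhds (u αstar σ'')) := by
        have := (hucont.tendsto (αstar, σ'')).comp (hαtend.prodMk_nhds
          (tendsto_const_nhds (x := σ'')))
        simpa [Function.comp_def] using this
      have hu2 : Filter.Tendsto (fun j => u (αseq (φ (ψ j))) (σseq (ψ j)))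
          Filter.atTop (nhds (u αstar σh)) := by
        have := (hucont.tendsto (αstar, σh)).comp hpair
        simpa [Function.comp_def] using this
      refine le_of_tendsto_of_tendsto' hu1 hu2 fun j => ?_
      have h5 := hσBR (ψ j)
      rw [hBR] at h5
      exact h5.2 σ'' hσ''
    -- σh is a best reply at a perturbed mechanism with positive step
    have hσhBRt : σh ∈ BR (αseq (φ (ψ 0))) := by
      apply hullBR (αseq (φ (ψ 0)))
      rw [hφ (ψ 0)]
      exact hσhM
    have hle1 : v (αseq (φ (ψ 0))) σh ≤ V (αseq (φ (ψ 0))) :=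
      (hV _ (hαseqA _)).2 (Set.mem_image_of_mem _ hσhBRt)
    have hle2 : V (αseq (φ (ψ 0))) ≤ Vstar :=
      hVstar.2 (Set.mem_image_of_mem V (hαseqA _))
    -- concavity
    set t0 : ℝ := tseq (φ (ψ 0)) with ht0def
    have hconc := (hvconc σh hσhSig).2 hαstarA hdA
      (by linarith [ht1 (φ (ψ 0))] : (0:ℝ) ≤ 1 - t0)
      (ht0 (φ (ψ 0))).le (by ring)
    rw [smul_eq_mul, smul_eq_mul] at hconc
    have hconc2 : (1 - t0) * v αstar σh + t0 * v d σh ≤ v (αseq (φ (ψ 0))) σh := hconc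
    rw [hveq] at hconc2
    have hfin : t0 * v d σh ≤ t0 * Vstar := by linarith
    have : v d σh ≤ Vstar := le_of_mul_le_mul_left hfin (ht0 (φ (ψ 0)))
    exact ⟨σh, hσhBRstar, hveq, this⟩
  -- ====== combining all directions ======
  have hKclosed : IsClosed {σ | σ ∈ BR αstar ∧ v αstar σ = Vstar} := by
    have hBRclosed : IsClosed (BR αstar) := by
      rw [hBR]
      have h1 : {σ | σ ∈ Sig ∧ ∀ σ' ∈ Sig, u αstar σ' ≤ u αstar σ}
          = Sig ∩ ⋂ σ' ∈ Sig, {σ | u αstar σ' ≤ u αstar σ} := by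
        ext σ; simp [Set.mem_iInter]
      rw [h1]
      exact hSigCompact.isClosed.inter
        (isClosed_biInter fun σ' _ => isClosed_le continuous_const (hu_c αstar))
    have h2 : {σ | σ ∈ BR αstar ∧ v αstar σ = Vstar}
        = BR αstar ∩ {σ | v αstar σ = Vstar} := rfl
    rw [h2]
    exact hBRclosed.inter (isClosed_eq (hv_c αstar) continuous_const)
  have hKcomp : IsCompact {σ | σ ∈ BR αstar ∧ v αstar σ = Vstar} :=
    IsCompact.of_isClosed_subset hSigCompact hKclosed
      (fun σ hσ => hBRsubSig αstar hσ.1)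
  have hKconv : Convex ℝ {σ | σ ∈ BR αstar ∧ v αstar σ = Vstar} := by
    intro x hx y hy a b ha hb hab
    refine ⟨hBRconv αstar hx.1 hy.1 ha hb hab, ?_⟩
    rw [affine_comb Sig (v αstar) (hvaff αstar) (hBRsubSig αstar hx.1)
      (hBRsubSig αstar hy.1) ha hb hab, hx.2, hy.2, ← add_mul, hab, one_mul]
  have hKne : ∃ σ0, σ0 ∈ BR αstar ∧ v αstar σ0 = Vstar := by
    obtain ⟨σ0, h1, h2⟩ := (hV αstar hαstarA).1
    refine ⟨σ0, h1, ?_⟩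
    rw [← hαstaropt]
    exact h2
  have key : ∃ σK, (σK ∈ BR αstar ∧ v αstar σK = Vstar) ∧ ∀ α ∈ A, v α σK ≤ Vstar := by
    by_contra hcon
    push_neg at hcon
    -- cover K by finitely many deviation sets
    have hcover : {σ | σ ∈ BR αstar ∧ v αstar σ = Vstar}
        ⊆ ⋃ a : A, {σ | Vstar < v (↑a) σ} := by
      intro σ hσ
      obtain ⟨α, hαA, hlt⟩ := hcon σ hσ
      exact Set.mem_iUnion.mpr ⟨⟨α, hαA⟩, hlt⟩
    obtain ⟨D, hD⟩ := hKcomp.elim_finite_subcover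
      (fun a : A => {σ | Vstar < v (↑a) σ})
      (fun a => isOpen_lt continuous_const (hv_c (↑a))) hcover
    have hDgood : ∀ σ ∈ {σ | σ ∈ BR αstar ∧ v αstar σ = Vstar},
        ∃ a ∈ D, Vstar < v (↑a) σ := by
      intro σ hσ
      have := hD hσ
      simpa using this
    -- separation
    set G : (Fin n → S → ℝ) → (D → ℝ) := fun σ a => v (↑(↑a : A)) σ - Vstar with hG
    have hCcomp : IsCompact (G '' {σ | σ ∈ BR αstar ∧ v αstar σ = Vstar}) :=
      hKcomp.image (continuous_pi fun a => (hv_c _).sub continuous_const)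
    have hCconv : Convex ℝ (G '' {σ | σ ∈ BR αstar ∧ v αstar σ = Vstar}) := by
      rintro - ⟨σ₁, hσ₁, rfl⟩ - ⟨σ₂, hσ₂, rfl⟩ p q hp hq hpq
      refine ⟨p • σ₁ + q • σ₂, hKconv hσ₁ hσ₂ hp hq hpq, ?_⟩
      funext a
      have h6 := affine_comb Sig (v (↑(↑a : A))) (hvaff _) (hBRsubSig αstar hσ₁.1)
        (hBRsubSig αstar hσ₂.1) hp hq hpq
      simp only [hG, Pi.add_apply, Pi.smul_apply, smul_eq_mul]
      rw [h6]
      have hpq1 : p + q = 1 := hpq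
      linear_combination Vstar * hpq1
    have hOconv : Convex ℝ {y : D → ℝ | ∀ a, y a ≤ 0} := by
      intro x hx y hy p q hp hq hpq a
      have h7 : p * x a ≤ 0 := by
        have := mul_le_mul_of_nonneg_left (hx a) hp; simpa using this
      have h8 : q * y a ≤ 0 := by
        have := mul_le_mul_of_nonneg_left (hy a) hq; simpa using this
      simp only [Pi.add_apply, Pi.smul_apply, smul_eq_mul]
      linarith
    have hOclosed : IsClosed {y : D → ℝ | ∀ a, y a ≤ 0} := by
      have h9 : {y : D → ℝ | ∀ a, y a ≤ 0} = ⋂ a, {y : D → ℝ | y a ≤ 0} := by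
        ext y; simp [Set.mem_iInter]
      rw [h9]
      exact isClosed_iInter fun a => isClosed_le (continuous_apply a) continuous_const
    have hdisj : Disjoint (G '' {σ | σ ∈ BR αstar ∧ v αstar σ = Vstar})
        {y : D → ℝ | ∀ a, y a ≤ 0} := by
      rw [Set.disjoint_left]
      rintro - ⟨σ, hσ, rfl⟩ hyO
      obtain ⟨a, haD, hlt⟩ := hDgood σ hσ
      have := hyO ⟨a, haD⟩
      simp only [hG] at this
      linarith
    obtain ⟨f, s₀, t₀, hfC, hst, hfO⟩ := geometric_hahn_banach_compact_closed
      hCconv hCcomp hOconv hOclosed hdisj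
    have ht₀neg : t₀ < 0 := by
      have h10 : (0 : D → ℝ) ∈ {y : D → ℝ | ∀ a, y a ≤ 0} := fun a => le_refl 0
      have := hfO 0 h10
      simpa using this
    set c : D → ℝ := fun a => f (fun j => if a = j then 1 else 0) with hcdef
    have hfeq : ∀ y : D → ℝ, f y = ∑ a, y a * c a := by
      intro y
      conv_lhs => rw [pi_eq_sum_univ y]
      rw [map_sum]
      exact Finset.sum_congr rfl fun a _ => by
        rw [map_smul, smul_eq_mul]
    have hcnp : ∀ a, c a ≤ 0 := by
      intro a
      by_contra hpos
      push_neg at hpos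
      have hyO : (fun j => if a = j then ((t₀ - 1) / c a) else 0)
          ∈ {y : D → ℝ | ∀ b, y b ≤ 0} := by
        intro b
        dsimp only
        split
        · exact (div_neg_of_neg_of_pos (by linarith) hpos).le
        · exact le_refl 0
      have h1 := hfO _ hyO
      have h2 : f (fun j => if a = j then ((t₀ - 1) / c a) else 0) = t₀ - 1 := by
        have h3 : (fun j => if a = j then ((t₀ - 1) / c a) else 0)
            = ((t₀ - 1) / c a) • (fun j => if a = j then (1:ℝ) else 0) := by
          funext j; dsimp only [Pi.smul_apply, smul_eq_mul]; split <;> simp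
        rw [h3, map_smul, smul_eq_mul]
        exact div_mul_cancel₀ _ (ne_of_gt hpos)
      rw [h2] at h1
      linarith
    set lam : D → ℝ := fun a => -c a with hlam
    have hlam0 : ∀ a, 0 ≤ lam a := fun a => neg_nonneg.mpr (hcnp a)
    have hKstrict : ∀ σ ∈ {σ | σ ∈ BR αstar ∧ v αstar σ = Vstar},
        0 < ∑ a, lam a * (v (↑(↑a : A)) σ - Vstar) := by
      intro σ hσ
      have h1 := hfC _ ⟨σ, hσ, rfl⟩
      rw [hfeq] at h1
      have hflip : ∑ a, lam a * (v (↑(↑a : A)) σ - Vstar)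
          = -(∑ a, (G σ a) * c a) := by
        rw [← Finset.sum_neg_distrib]
        exact Finset.sum_congr rfl fun a _ => by simp only [hlam, hG]; ring
      rw [hflip]
      simp only [hG] at h1
      linarith
    have hsum : 0 < ∑ a, lam a := by
      rcases (Finset.sum_nonneg fun a _ => hlam0 a).lt_or_eq with h | h
      · exact h
      · exfalso
        have hall : ∀ a ∈ Finset.univ, lam a = 0 :=
          (Finset.sum_eq_zero_iff_of_nonneg fun a _ => hlam0 a).mp h.symm
        obtain ⟨σ0, hσ0⟩ := hKne
        have := hKstrict σ0 hσ0
        rw [Finset.sum_congr rfl (fun a ha => by rw [hall a ha, zero_mul])] at this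
        simp at this
    have habarA : (Finset.univ.centerMass lam
        fun a : D => ((↑a : A) : EuclideanSpace ℝ (Fin k))) ∈ A :=
      hAconv.centerMass_mem (fun a _ => hlam0 a) hsum (fun a _ => (↑a : A).2)
    obtain ⟨σ₀, hσ₀BR, hσ₀v, hσ₀le⟩ := hdir _ habarA
    have hσ₀K : σ₀ ∈ {σ | σ ∈ BR αstar ∧ v αstar σ = Vstar} := ⟨hσ₀BR, hσ₀v⟩
    have hσ₀Sig : σ₀ ∈ Sig := hBRsubSig αstar hσ₀BR
    have hJ := (hvconc σ₀ hσ₀Sig).le_map_centerMass (t := Finset.univ) (w := lam)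
      (p := fun a : D => ((↑a : A) : EuclideanSpace ℝ (Fin k)))
      (fun a _ => hlam0 a) hsum (fun a _ => (↑a : A).2)
    have hcm : Finset.univ.centerMass lam
        ((fun α => v α σ₀) ∘ fun a : D => ((↑a : A) : EuclideanSpace ℝ (Fin k)))
        = (∑ a, lam a)⁻¹ * ∑ a, lam a * v (↑(↑a : A)) σ₀ := by
      simp only [Finset.centerMass, smul_eq_mul, Function.comp]
    have hstrict := hKstrict σ₀ hσ₀K
    have h5 : (∑ a, lam a) * Vstar < ∑ a, lam a * v (↑(↑a : A)) σ₀ := by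
      have h6 : ∑ a, lam a * (v (↑(↑a : A)) σ₀ - Vstar)
          = ∑ a, lam a * v (↑(↑a : A)) σ₀ - (∑ a, lam a) * Vstar := by
        rw [Finset.sum_mul]
        rw [← Finset.sum_sub_distrib]
        exact Finset.sum_congr rfl fun a _ => by ring
      linarith
    have hinv : (0:ℝ) < (∑ a, lam a)⁻¹ := inv_pos.mpr hsum
    have h7 : Vstar < (∑ a, lam a)⁻¹ * ∑ a, lam a * v (↑(↑a : A)) σ₀ := by
      calc Vstar = (∑ a, lam a)⁻¹ * ((∑ a, lam a) * Vstar) := by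
            rw [← mul_assoc, inv_mul_cancel₀ (ne_of_gt hsum), one_mul]
        _ < (∑ a, lam a)⁻¹ * ∑ a, lam a * v (↑(↑a : A)) σ₀ :=
            mul_lt_mul_of_pos_left h5 hinv
    rw [hcm] at hJ
    linarith [hσ₀le]
  obtain ⟨σhat, ⟨hσhatBR, hσhatv⟩, hσhatNash⟩ := key
  refine ⟨αstar, hαstarA, σhat, hσhatBR, hσhatv, fun α hα => ?_⟩
  rw [hσhatv]
  exact hσhatNash α hα
end

section
/- In a principal-agent problem in which v is additionally concave in its first argument, suppose that at some α* ∈ argmax_{α ∈ A} V(α) the game is aligned, i.e. v(α*, σ) = V* for every σ ∈ BR(α*). Then there is no value of commitment: there exist α̂ ∈ A and σ̂ ∈ BR(α̂) such that v(α̂, σ̂) = V* and v(α̂, σ̂) ≥ v(α, σ̂) for all α ∈ A. -/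
open Filter Set

/-- In a principal-agent problem with `v` concave in the mechanism,
if the game is aligned at an optimal mechanism `α*`, the principal does not
benefit from commitment. -/
theorem no_value_of_commitment_of_aligned
    {k n : ℕ} {S : Type} [Fintype S] [Nonempty S]
    (A : Set (EuclideanSpace ℝ (Fin k)))
    (hAne : A.Nonempty) (hAcomp : IsCompact A) (hAconv : Convex ℝ A)
    -- Σ = (Δ(S))ⁿ
    (Sig : Set (Fin n → S → ℝ))
    (hSig : Sig = {σ | ∀ i, σ i ∈ stdSimplex ℝ S})
    -- u and v : jointly continuous and affine in the second argument
    (u v : EuclideanSpace ℝ (Fin k) → (Fin n → S → ℝ) → ℝ)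
    (hucont : Continuous fun p : EuclideanSpace ℝ (Fin k) × (Fin n → S → ℝ) =>
      u p.1 p.2)
    (hvcont : Continuous fun p : EuclideanSpace ℝ (Fin k) × (Fin n → S → ℝ) =>
      v p.1 p.2)
    (huaff : ∀ α, ∀ σ₁ ∈ Sig, ∀ σ₂ ∈ Sig, ∀ t : ℝ, 0 ≤ t → t ≤ 1 →
      u α ((1 - t) • σ₁ + t • σ₂) = (1 - t) * u α σ₁ + t * u α σ₂)
    (hvaff : ∀ α, ∀ σ₁ ∈ Sig, ∀ σ₂ ∈ Sig, ∀ t : ℝ, 0 ≤ t → t ≤ 1 →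
      v α ((1 - t) • σ₁ + t • σ₂) = (1 - t) * v α σ₁ + t * v α σ₂)
    -- the agent's best-reply correspondence
    (BR : EuclideanSpace ℝ (Fin k) → Set (Fin n → S → ℝ))
    (hBR : ∀ α, BR α = {σ | σ ∈ Sig ∧ ∀ σ' ∈ Sig, u α σ' ≤ u α σ})
    -- the principal's value V(α) = max_{σ ∈ BR(α)} v(α, σ), V* = max_{α ∈ A} V(α)
    (V : EuclideanSpace ℝ (Fin k) → ℝ)
    (hV : ∀ α ∈ A, IsGreatest ((fun σ => v α σ) '' BR α) (V α))
    (Vstar : ℝ)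
    (hVstar : IsGreatest (V '' A) Vstar)
    -- v is additionally concave in its first argument
    (hvconc : ∀ σ ∈ Sig, ConcaveOn ℝ A fun α => v α σ)
    -- α* is an optimal mechanism
    (αstar : EuclideanSpace ℝ (Fin k))
    (hαstarA : αstar ∈ A)
    (hαstaropt : V αstar = Vstar)
    (haligned : ∀ σ ∈ BR αstar, v αstar σ = Vstar) :
    ∃ αhat ∈ A, ∃ σhat ∈ BR αhat,
      v αhat σhat = Vstar ∧ ∀ α ∈ A, v α σhat ≤ v αhat σhat := by
  classical
  -- continuity of sections
  have hucont1 : ∀ α, Continuous (fun σ => u α σ) := fun α =>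
    hucont.comp (continuous_const.prodMk continuous_id)
  have hvcont1 : ∀ α, Continuous (fun σ => v α σ) := fun α =>
    hvcont.comp (continuous_const.prodMk continuous_id)
  -- basic facts about Sig
  have hSigpi : Sig = Set.pi univ (fun _ : Fin n => stdSimplex ℝ S) := by
    rw [hSig]; ext σ; simp [Set.mem_pi]
  have hSigconv : Convex ℝ Sig := by
    rw [hSigpi]; exact convex_pi fun i _ => convex_stdSimplex ℝ S
  have hSigcomp : IsCompact Sig := by
    rw [hSigpi]; exact isCompact_univ_pi fun i => isCompact_stdSimplex ℝ S
  -- the vertices of Sig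
  set vm : (Fin n → S) → (Fin n → S → ℝ) := fun e i s => if e i = s then 1 else 0 with hvm
  have hvmSig : ∀ e, vm e ∈ Sig := by
    intro e; rw [hSig]; intro i
    exact ite_eq_mem_stdSimplex ℝ (e i)
  have hSigne : Sig.Nonempty := ⟨vm (fun _ => Classical.arbitrary S), hvmSig _⟩
  have hSighull : Sig = convexHull ℝ (Set.range vm) := by
    have hr : Set.pi univ (fun _ : Fin n => Set.range fun (s : S) (j : S) =>
        if s = j then (1:ℝ) else 0) = Set.range vm := by
      ext x; constructor
      · intro hx
        choose e he using fun i => hx i (mem_univ i)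
        exact ⟨e, funext fun i => (he i)⟩
      · rintro ⟨e, rfl⟩ i _
        exact ⟨e i, rfl⟩
    rw [hSigpi, ← hr, convexHull_pi]
    refine congrArg (Set.pi univ) (funext fun _ => ?_)
    exact (convexHull_basis_eq_stdSimplex (R := ℝ) (ι := S)).symm
  -- u α is convex (indeed affine) on Sig
  have huconvexOn : ∀ α, ConvexOn ℝ Sig (fun σ => u α σ) := by
    intro α
    refine ⟨hSigconv, ?_⟩
    intro x hx y hy a b ha hb hab
    have h := huaff α x hx y hy b hb (by linarith)
    rw [show (1 : ℝ) - b = a by linarith] at h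
    simp only [smul_eq_mul]
    exact le_of_eq h
  -- every best-reply set contains a vertex
  have hvert : ∀ α : EuclideanSpace ℝ (Fin k), ∃ e : Fin n → S, vm e ∈ BR α := by
    intro α
    obtain ⟨σm, hσmSig, hmax⟩ := hSigcomp.exists_isMaxOn hSigne (hucont1 α).continuousOn
    have hx : σm ∈ convexHull ℝ (Set.range vm) := hSighull ▸ hσmSig
    obtain ⟨y, hy, hle⟩ := (huconvexOn α).exists_ge_of_mem_convexHull
      (by rw [hSighull]; exact subset_convexHull ℝ _) hx
    obtain ⟨e, rfl⟩ := hy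
    refine ⟨e, ?_⟩
    rw [hBR]
    exact ⟨hvmSig e, fun σ' hσ' => le_trans (hmax hσ') hle⟩
  -- facts about K = BR αstar
  have hKsub : BR αstar ⊆ Sig := by rw [hBR]; exact fun σ h => h.1
  have hKconv : Convex ℝ (BR αstar) := by
    rw [hBR]
    intro x hx y hy a b ha hb hab
    refine ⟨hSigconv hx.1 hy.1 ha hb hab, fun σ' hσ' => ?_⟩
    have h := huaff αstar x hx.1 y hy.1 b hb (by linarith)
    rw [show (1 : ℝ) - b = a by linarith] at h
    have h1 : a * u αstar σ' ≤ a * u αstar x :=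
      mul_le_mul_of_nonneg_left (hx.2 σ' hσ') ha
    have h2 : b * u αstar σ' ≤ b * u αstar y :=
      mul_le_mul_of_nonneg_left (hy.2 σ' hσ') hb
    calc u αstar σ' = a * u αstar σ' + b * u αstar σ' := by rw [← add_mul, hab, one_mul]
      _ ≤ a * u αstar x + b * u αstar y := add_le_add h1 h2
      _ = u αstar (a • x + b • y) := h.symm
  have hKclosed : IsClosed (BR αstar) := by
    rw [hBR]
    have : {σ | σ ∈ Sig ∧ ∀ σ' ∈ Sig, u αstar σ' ≤ u αstar σ}
        = Sig ∩ ⋂ σ' ∈ Sig, {σ | u αstar σ' ≤ u αstar σ} := by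
      ext σ; simp [Set.mem_iInter]
    rw [this]
    exact hSigcomp.isClosed.inter (isClosed_biInter fun σ' _ =>
      isClosed_le continuous_const (hucont1 αstar))
  have hKcomp : IsCompact (BR αstar) := hSigcomp.of_isClosed_subset hKclosed hKsub
  -- main case split
  by_cases hcase : ∃ σ ∈ BR αstar, ∀ α ∈ A, v α σ ≤ Vstar
  · obtain ⟨σ, hσK, hbound⟩ := hcase
    exact ⟨αstar, hαstarA, σ, hσK, haligned σ hσK,
      fun α hα => (hbound α hα).trans (haligned σ hσK).ge⟩
  exfalso
  push_neg at hcase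
  -- finitely many mechanisms suffice to dominate Vstar on K
  have hinter : (BR αstar ∩ ⋂ a : A, {σ | v a.1 σ ≤ Vstar}) = ∅ := by
    rw [Set.eq_empty_iff_forall_notMem]
    rintro σ ⟨hσK, hall⟩
    obtain ⟨α, hαA, hlt⟩ := hcase σ hσK
    exact absurd (Set.mem_iInter.1 hall ⟨α, hαA⟩) (not_le.2 hlt)
  obtain ⟨F, hF⟩ := hKcomp.elim_finite_subfamily_closed _
    (fun a : A => isClosed_le (hvcont1 a.1) continuous_const) hinter
  have hFK : ∀ σ ∈ BR αstar, ∃ a ∈ F, Vstar < v a.1 σ := by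
    intro σ hσ
    by_contra h
    push_neg at h
    have : σ ∈ BR αstar ∩ ⋂ a ∈ F, {σ | v a.1 σ ≤ Vstar} :=
      ⟨hσ, Set.mem_iInter₂.2 fun a ha => h a ha⟩
    rw [hF] at this
    exact this
  -- separation in ↥F → ℝ
  set Φ : (Fin n → S → ℝ) → (↥F → ℝ) := fun σ a => v a.1.1 σ with hΦ
  have hΦcont : Continuous Φ := continuous_pi fun a => hvcont1 a.1.1
  have hCcomp : IsCompact (Φ '' BR αstar) := hKcomp.image hΦcont
  have hCconv : Convex ℝ (Φ '' BR αstar) := by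
    rintro _ ⟨x, hx, rfl⟩ _ ⟨y, hy, rfl⟩ a b ha hb hab
    refine ⟨a • x + b • y, hKconv hx hy ha hb hab, ?_⟩
    funext i
    have h := hvaff i.1.1 x (hKsub hx) y (hKsub hy) b hb (by linarith)
    rw [show (1 : ℝ) - b = a by linarith] at h
    simp only [hΦ, Pi.add_apply, Pi.smul_apply, smul_eq_mul]
    exact h
  set D : Set (↥F → ℝ) := {x | ∀ a, x a ≤ Vstar} with hD
  have hDconv : Convex ℝ D := by
    intro x hx y hy a b ha hb hab i
    have h1 : a * x i ≤ a * Vstar := mul_le_mul_of_nonneg_left (hx i) ha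
    have h2 : b * y i ≤ b * Vstar := mul_le_mul_of_nonneg_left (hy i) hb
    simp only [Pi.add_apply, Pi.smul_apply, smul_eq_mul]
    have h3 : a * Vstar + b * Vstar = Vstar := by rw [← add_mul, hab, one_mul]
    linarith
  have hDclosed : IsClosed D := by
    have : D = ⋂ a, {x : ↥F → ℝ | x a ≤ Vstar} := by
      ext x; simp [hD, Set.mem_iInter]
    rw [this]
    exact isClosed_iInter fun a => isClosed_le (continuous_apply a) continuous_const
  have hdisj : Disjoint D (Φ '' BR αstar) := by
    rw [Set.disjoint_left]
    rintro x hxD ⟨σ, hσK, rfl⟩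
    obtain ⟨a, haF, hlt⟩ := hFK σ hσK
    exact absurd (hxD ⟨a, haF⟩) (not_le.2 hlt)
  obtain ⟨f, s₁, s₂, hfD, hs, hfC⟩ :=
    geometric_hahn_banach_closed_compact hDconv hDclosed hCconv hCcomp hdisj
  set lam : ↥F → ℝ := fun i => f (fun j => if i = j then (1:ℝ) else 0) with hlam
  have hf_eval : ∀ x : ↥F → ℝ, f x = ∑ i, x i * lam i := by
    intro x
    conv_lhs => rw [pi_eq_sum_univ x]
    rw [map_sum]
    simp only [map_smul, smul_eq_mul, hlam]
  have hconstD : (fun _ : ↥F => Vstar) ∈ D := fun i => le_refl _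
  have hfc : f (fun _ : ↥F => Vstar) < s₁ := hfD _ hconstD
  have hlam0 : ∀ i, 0 ≤ lam i := by
    intro i
    by_contra h
    push_neg at h
    have hni : (0:ℝ) < -lam i := by linarith
    set r := (s₁ - f (fun _ : ↥F => Vstar)) / (-lam i) with hr
    have hrpos : 0 < r := div_pos (by linarith [hfc]) hni
    have hmem : ((fun _ : ↥F => Vstar) - r • (fun j => if i = j then (1:ℝ) else 0)) ∈ D := by
      intro j
      have h0 : 0 ≤ r * (if i = j then (1:ℝ) else 0) := by
        apply mul_nonneg hrpos.le
        split_ifs <;> norm_num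
      simp only [Pi.sub_apply, Pi.smul_apply, smul_eq_mul]
      linarith
    have hlt := hfD _ hmem
    rw [map_sub, map_smul] at hlt
    simp only [smul_eq_mul] at hlt
    have hlameq : f (fun j => if i = j then (1:ℝ) else 0) = lam i := (congrFun hlam i).symm
    rw [hlameq] at hlt
    have hcancel : r * (-lam i) = s₁ - f (fun _ : ↥F => Vstar) :=
      div_mul_cancel₀ _ hni.ne'
    have h7 : r * (-lam i) = -(r * lam i) := by ring
    linarith
  set T := ∑ i, lam i with hT
  obtain ⟨e₀, he₀⟩ := hvert αstar
  have hfC0 : s₂ < f (Φ (vm e₀)) := hfC _ ⟨vm e₀, he₀, rfl⟩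
  have hTpos : 0 < T := by
    rcases lt_or_ge 0 T with h | h
    · exact h
    have hT0 : T = 0 := le_antisymm h (Finset.sum_nonneg fun i _ => hlam0 i)
    have hz : ∀ i ∈ Finset.univ, lam i = 0 :=
      (Finset.sum_eq_zero_iff_of_nonneg (fun i _ => hlam0 i)).1 hT0
    have h1 : f (fun _ : ↥F => Vstar) = 0 := by
      rw [hf_eval]
      exact Finset.sum_eq_zero fun i hi => by rw [hz i hi, mul_zero]
    have h2 : f (Φ (vm e₀)) = 0 := by
      rw [hf_eval]
      exact Finset.sum_eq_zero fun i hi => by rw [hz i hi, mul_zero]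
    rw [h1] at hfc
    rw [h2] at hfC0
    linarith
  set w : ↥F → ℝ := fun i => lam i / T with hw
  have hw0 : ∀ i, 0 ≤ w i := fun i => div_nonneg (hlam0 i) hTpos.le
  have hw1 : ∑ i, w i = 1 := by
    rw [hw]; rw [← Finset.sum_div]; exact div_self hTpos.ne'
  set α₀ : EuclideanSpace ℝ (Fin k) := ∑ i, w i • (i.1.1 : EuclideanSpace ℝ (Fin k)) with hα₀def
  have hα₀A : α₀ ∈ A := hAconv.sum_mem (fun i _ => hw0 i) hw1 (fun i _ => i.1.2)
  -- v α₀ dominates Vstar on all of BR αstar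
  have hα₀dom : ∀ σ ∈ BR αstar, Vstar < v α₀ σ := by
    intro σ hσ
    have h2 := hfC _ ⟨σ, hσ, rfl⟩
    rw [hf_eval] at h2 hfc
    have hVT : ∑ i, Vstar * lam i = Vstar * T := by rw [hT, Finset.mul_sum]
    have hconst : (fun _ : ↥F => Vstar) = fun _ : ↥F => Vstar := rfl
    have hsep : Vstar * T < ∑ i, Φ σ i * lam i := by
      rw [← hVT]; linarith
    have hjensen := (hvconc σ (hKsub hσ)).le_map_sum (t := Finset.univ)
      (fun i _ => hw0 i) hw1 (fun (i : ↥F) _ => i.1.2)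
    simp only [smul_eq_mul] at hjensen
    have hsum : ∑ i, w i * v i.1.1 σ = (∑ i, Φ σ i * lam i) / T := by
      rw [Finset.sum_div]
      refine Finset.sum_congr rfl fun i _ => ?_
      simp only [hw, hΦ]
      ring
    have hVlt : Vstar < ∑ i, w i * v i.1.1 σ := by
      rw [hsum, lt_div_iff₀ hTpos]
      linarith
    calc Vstar < ∑ i, w i * v i.1.1 σ := hVlt
      _ ≤ v (∑ i, w i • (i.1.1 : EuclideanSpace ℝ (Fin k))) σ := hjensen
      _ = v α₀ σ := by rw [← hα₀def]
  -- the perturbed mechanisms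
  set tk : ℕ → ℝ := fun m => 1 / ((m : ℝ) + 1) with htkdef
  have htkpos : ∀ m, 0 < tk m := fun m => by positivity
  have htkle : ∀ m, tk m ≤ 1 := by
    intro m
    rw [htkdef]
    rw [div_le_one (by positivity)]
    have : (0:ℝ) ≤ (m:ℝ) := Nat.cast_nonneg m
    linarith
  set αk : ℕ → EuclideanSpace ℝ (Fin k) :=
    fun m => (1 - tk m) • αstar + tk m • α₀ with hαkdef
  have hαkA : ∀ m, αk m ∈ A := by
    intro m
    show (1 - tk m) • αstar + tk m • α₀ ∈ A
    exact hAconv hαstarA hα₀A (by linarith [htkpos m, htkle m]) (htkpos m).le (by ring)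
  -- step 6 : BR (αk m) is disjoint from BR αstar
  have hstep6 : ∀ m, ∀ σ ∈ BR (αk m), σ ∉ BR αstar := by
    intro m σ hσBR hσK
    have h1 : v (αk m) σ ≤ V (αk m) := (hV _ (hαkA m)).2 ⟨σ, hσBR, rfl⟩
    have h2 : V (αk m) ≤ Vstar := hVstar.2 ⟨αk m, hαkA m, rfl⟩
    have h3 : (1 - tk m) • (v αstar σ) + (tk m) • (v α₀ σ) ≤
        v ((1 - tk m) • αstar + tk m • α₀) σ :=
      (hvconc σ (hKsub hσK)).2 hαstarA hα₀A
        (by linarith [htkpos m, htkle m]) (htkpos m).le (by ring)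
    simp only [smul_eq_mul] at h3
    have h4 : v αstar σ = Vstar := haligned σ hσK
    have h5 : Vstar < v α₀ σ := hα₀dom σ hσK
    rw [h4] at h3
    have h6 : αk m = (1 - tk m) • αstar + tk m • α₀ := rfl
    rw [← h6] at h3
    nlinarith [mul_pos (htkpos m) (sub_pos.2 h5)]
  -- pigeonhole on vertices
  choose ev hev using fun m => hvert (αk m)
  obtain ⟨e, heInf⟩ := Finite.exists_infinite_fiber ev
  have hinf : (ev ⁻¹' {e}).Infinite := Set.infinite_coe_iff.1 heInf
  have hfreq : ∃ᶠ m in atTop, m ∈ ev ⁻¹' {e} :=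
    Nat.frequently_atTop_iff_infinite.2 hinf
  -- convergence of αk to αstar
  have htk0 : Tendsto tk atTop (nhds 0) := tendsto_one_div_add_atTop_nhds_zero_nat
  have htend : Tendsto αk atTop (nhds αstar) := by
    have h1 : Tendsto (fun m => (1 - tk m) • αstar + tk m • α₀) atTop
        (nhds ((1 - (0:ℝ)) • αstar + (0:ℝ) • α₀)) :=
      ((tendsto_const_nhds.sub htk0).smul tendsto_const_nhds).add
        (htk0.smul tendsto_const_nhds)
    simpa using h1
  -- the vertex e is a best reply to αstar
  have heK : vm e ∈ BR αstar := by
    rw [hBR]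
    refine ⟨hvmSig e, fun σ' hσ' => ?_⟩
    by_contra hlt
    push_neg at hlt
    have hg : Tendsto (fun m => u (αk m) σ' - u (αk m) (vm e)) atTop
        (nhds (u αstar σ' - u αstar (vm e))) := by
      have hc1 : Tendsto (fun m => (αk m, σ')) atTop (nhds (αstar, σ')) :=
        htend.prodMk_nhds tendsto_const_nhds
      have hc2 : Tendsto (fun m => (αk m, vm e)) atTop (nhds (αstar, vm e)) :=
        htend.prodMk_nhds tendsto_const_nhds
      exact ((hucont.tendsto _).comp hc1).sub ((hucont.tendsto _).comp hc2)
    have hpos' : 0 < u αstar σ' - u αstar (vm e) := sub_pos.2 hlt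
    have hev' : ∀ᶠ m in atTop, 0 < u (αk m) σ' - u (αk m) (vm e) :=
      hg (Ioi_mem_nhds hpos')
    obtain ⟨m, hm1, hm2⟩ := (hfreq.and_eventually hev').exists
    have hbr := hev m
    rw [Set.mem_preimage, Set.mem_singleton_iff] at hm1
    rw [hm1] at hbr
    rw [hBR] at hbr
    have := hbr.2 σ' hσ'
    linarith
  -- final contradiction
  obtain ⟨m, hm⟩ := hinf.nonempty
  rw [Set.mem_preimage, Set.mem_singleton_iff] at hm
  have hbr := hev m
  rw [hm] at hbr
  exact hstep6 m (vm e) hbr heK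
end

section
/- In the evidence game, fix any μ ∈ (0,1). If σ ∈ [0,1] is a best reply of the agent to the mechanism α, and α maximises the principal's expected payoff against σ, i.e. P(α, σ) ≥ P(α', σ) for every mechanism α', then P(α, σ) ≤ max_{a ∈ {1,2,3}} ( μ·v(a, θ₁) + (1−μ)·v(a, θ₂) ); that is, without commitment the principal can do no better than playing the ex-ante optimal constant action. -/
open scoped BigOperators

/-- Principal's payoff from each action against type `θ₁`: `v(a,θ₁) = ν(θ₁)·u(a,θ₁) + ψ(a)`. -/
noncomputable def v1 : Fin 3 → ℝ := ![2, 4, 5]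

/-- Principal's payoff from each action against type `θ₂`: `v(a,θ₂) = ν(θ₂)·u(a,θ₂) + ψ(a)`. -/
noncomputable def v2 (ε : ℝ) : Fin 3 → ℝ := ![1, -1 + 3 * ε, -1]

/-- Agent's (type `θ₂`) payoff from each action. -/
noncomputable def u2 (ε : ℝ) : Fin 3 → ℝ := ![0, 1 - ε, 1]

/-- A mechanism assigns to each message (`0` for `m₁`, `1` for `m₂`) a
probability distribution over the three actions. -/
def IsMech (α : Fin 2 → Fin 3 → ℝ) : Prop := ∀ m, α m ∈ stdSimplex ℝ (Fin 3)

/-- Type `θ₂`'s expected utility from sending message `m`. -/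
noncomputable def Uag (ε : ℝ) (α : Fin 2 → Fin 3 → ℝ) (m : Fin 2) : ℝ :=
  ∑ a, α m a * u2 ε a

/-- `σ ∈ [0,1]`, the probability that type `θ₂` sends `m₂`, is a best reply to
the mechanism `α`. -/
def IsBR (ε : ℝ) (α : Fin 2 → Fin 3 → ℝ) (σ : ℝ) : Prop :=
  σ ∈ Set.Icc (0 : ℝ) 1 ∧ (0 < σ → Uag ε α 0 ≤ Uag ε α 1) ∧
    (σ < 1 → Uag ε α 1 ≤ Uag ε α 0)

/-- The principal's expected payoff from mechanism `α` and agent strategy `σ`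
under prior `μ` on type `θ₁`. -/
noncomputable def P (ε μ : ℝ) (α : Fin 2 → Fin 3 → ℝ) (σ : ℝ) : ℝ :=
  μ * ∑ a, α 0 a * v1 a +
    (1 - μ) * ((1 - σ) * ∑ a, α 0 a * v2 ε a + σ * ∑ a, α 1 a * v2 ε a)

/-- Without commitment the principal can do no better than the
ex-ante optimal constant action: if `σ` is a best reply to `α` and `α`
maximises `P(·, σ)` over all mechanisms, then `P(α, σ)` is at most the maximal
ex-ante payoff `max_a μ·v(a,θ₁) + (1−μ)·v(a,θ₂)`. -/
theorem no_commitment_payoff_at_most_ex_ante_optimum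
    (ε μ : ℝ) (hε : ε ∈ Set.Ioo (2 / 9 : ℝ) (1 / 3)) (hμ : μ ∈ Set.Ioo (0 : ℝ) 1)
    (α : Fin 2 → Fin 3 → ℝ) (hα : IsMech α) (σ : ℝ) (hσ : IsBR ε α σ)
    (hopt : ∀ α' : Fin 2 → Fin 3 → ℝ, IsMech α' → P ε μ α' σ ≤ P ε μ α σ) :
    P ε μ α σ ≤
      max (max (μ * v1 0 + (1 - μ) * v2 ε 0) (μ * v1 1 + (1 - μ) * v2 ε 1))
        (μ * v1 2 + (1 - μ) * v2 ε 2) := by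
  obtain ⟨hε1, hε2⟩ := hε
  obtain ⟨hμ0, hμ1⟩ := hμ
  obtain ⟨⟨hσ0, hσ1⟩, hbr1, hbr2⟩ := hσ
  have h0 := hα 0
  have h1 := hα 1
  rw [stdSimplex, Set.mem_setOf_eq] at h0 h1
  obtain ⟨h0n, h0s⟩ := h0
  obtain ⟨h1n, h1s⟩ := h1
  rw [Fin.sum_univ_three] at h0s h1s
  have h00 := h0n 0; have h01 := h0n 1; have h02 := h0n 2
  have h10 := h1n 0; have h11 := h1n 1; have h12 := h1n 2
  have hv0 : μ * v1 0 + (1 - μ) * v2 ε 0 = μ * 2 + (1 - μ) * 1 := by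
    simp [v1, v2]
  have hv1 : μ * v1 1 + (1 - μ) * v2 ε 1 = μ * 4 + (1 - μ) * (-1 + 3 * ε) := by
    simp [v1, v2]
  have hv2 : μ * v1 2 + (1 - μ) * v2 ε 2 = μ * 5 + (1 - μ) * (-1) := by
    simp [v1, v2]
  rw [hv0, hv1, hv2]
  set M := max (max (μ * 2 + (1 - μ) * 1) (μ * 4 + (1 - μ) * (-1 + 3 * ε)))
      (μ * 5 + (1 - μ) * (-1)) with hM
  have hM0 : μ * 2 + (1 - μ) * 1 ≤ M :=
    le_trans (le_max_left _ _) (le_max_left _ _)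
  have hM1 : μ * 4 + (1 - μ) * (-1 + 3 * ε) ≤ M :=
    le_trans (le_max_right _ _) (le_max_left _ _)
  have hM2 : μ * 5 + (1 - μ) * (-1) ≤ M := le_max_right _ _
  have hPα : P ε μ α σ = μ * (α 0 0 * 2 + α 0 1 * 4 + α 0 2 * 5) +
      (1 - μ) * ((1 - σ) * (α 0 0 * 1 + α 0 1 * (-1 + 3 * ε) + α 0 2 * (-1)) +
        σ * (α 1 0 * 1 + α 1 1 * (-1 + 3 * ε) + α 1 2 * (-1))) := by
    simp only [P, Fin.sum_univ_three, v1, v2, Matrix.cons_val_zero, Matrix.cons_val_one,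
      Matrix.head_cons, Matrix.cons_val_two, Matrix.tail_cons]
  rcases eq_or_lt_of_le hσ0 with hs | hs
  · -- σ = 0: P is a convex combination of constant-action payoffs
    rw [hPα, ← hs]
    nlinarith [mul_le_mul_of_nonneg_left hM0 h00, mul_le_mul_of_nonneg_left hM1 h01,
      mul_le_mul_of_nonneg_left hM2 h02]
  · -- σ > 0: optimality forces α 1 to be the point mass on action 0
    have hdev : P ε μ (![α 0, ![1, 0, 0]]) σ ≤ P ε μ α σ := by
      apply hopt
      intro m
      fin_cases m
      · simpa using hα 0
      · rw [stdSimplex, Set.mem_setOf_eq]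
        refine ⟨fun a => ?_, by simp [Fin.sum_univ_three]⟩
        fin_cases a <;> norm_num
    have hPdev : P ε μ (![α 0, ![1, 0, 0]]) σ = μ * (α 0 0 * 2 + α 0 1 * 4 + α 0 2 * 5) +
        (1 - μ) * ((1 - σ) * (α 0 0 * 1 + α 0 1 * (-1 + 3 * ε) + α 0 2 * (-1)) +
          σ * 1) := by
      simp only [P, Fin.sum_univ_three, v1, v2, Matrix.cons_val_zero, Matrix.cons_val_one,
        Matrix.head_cons, Matrix.cons_val_two, Matrix.tail_cons]
      ring
    rw [hPdev, hPα] at hdev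
    have h2 : (1 - μ) * (σ * 1) ≤
        (1 - μ) * (σ * (α 1 0 * 1 + α 1 1 * (-1 + 3 * ε) + α 1 2 * (-1))) := by
      linarith [hdev]
    have h3 : σ * 1 ≤ σ * (α 1 0 * 1 + α 1 1 * (-1 + 3 * ε) + α 1 2 * (-1)) :=
      le_of_mul_le_mul_left h2 (by linarith)
    have hsum1 : (1 : ℝ) ≤ α 1 0 * 1 + α 1 1 * (-1 + 3 * ε) + α 1 2 * (-1) :=
      le_of_mul_le_mul_left (by linarith [h3]) hs
    have hh1 : 0 ≤ α 1 1 * (1 - 3 * ε) := mul_nonneg h11 (by linarith)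
    have ha11 : α 1 1 = 0 :=
      le_antisymm (by linarith [hsum1, hh1, h1s, h11, h12]) h11
    have ha12 : α 1 2 = 0 :=
      le_antisymm (by linarith [hsum1, hh1, h1s, h11, h12]) h12
    have ha10 : α 1 0 = 1 := by linarith
    have hu1 : Uag ε α 1 = 0 := by
      simp [Uag, Fin.sum_univ_three, u2, ha10, ha11, ha12]
    have hu0 : Uag ε α 0 ≤ 0 := by rw [← hu1]; exact hbr1 hs
    have hu0e : α 0 0 * 0 + α 0 1 * (1 - ε) + α 0 2 * 1 ≤ 0 := by
      simpa only [Uag, Fin.sum_univ_three, u2, Matrix.cons_val_zero, Matrix.cons_val_one,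
        Matrix.head_cons, Matrix.cons_val_two, Matrix.tail_cons] using hu0
    have hh2 : 0 ≤ α 0 1 * ((1 - ε) - 2 / 3) := mul_nonneg h01 (by linarith)
    have hh3 : 0 ≤ α 0 1 * (1 - ε) := mul_nonneg h01 (by linarith)
    have ha01 : α 0 1 = 0 :=
      le_antisymm (by linarith [hu0e, hh2, hh3, h02]) h01
    have ha02 : α 0 2 = 0 :=
      le_antisymm (by linarith [hu0e, hh3]) h02
    have ha00 : α 0 0 = 1 := by linarith
    rw [hPα, ha00, ha01, ha02, ha10, ha11, ha12]
    calc μ * (1 * 2 + 0 * 4 + 0 * 5) +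
        (1 - μ) * ((1 - σ) * (1 * 1 + 0 * (-1 + 3 * ε) + 0 * (-1)) +
          σ * (1 * 1 + 0 * (-1 + 3 * ε) + 0 * (-1))) = μ * 2 + (1 - μ) * 1 := by ring
      _ ≤ M := hM0
end

section
/- In the evidence game, for every ε ∈ (2/9, 1/3) there exists a prior μ ∈ (0,1) such that the principal strictly benefits from commitment: the supremum of P(α, σ) over all pairs (α, σ) in which σ is a best reply of the agent to α strictly exceeds the supremum of P(α, σ) over all pairs (α, σ) in which σ is a best reply of the agent to α and, in addition, α maximises P(·, σ) over all mechanisms. -/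
open scoped BigOperators

lemma P_expand (ε μ : ℝ) (α : Fin 2 → Fin 3 → ℝ) (σ : ℝ) :
    P ε μ α σ = μ * (α 0 0 * 2 + α 0 1 * 4 + α 0 2 * 5) +
      (1 - μ) * ((1 - σ) * (α 0 0 - α 0 1 * (1 - 3*ε) - α 0 2) +
        σ * (α 1 0 - α 1 1 * (1 - 3*ε) - α 1 2)) := by
  simp only [P, v1, v2, Fin.sum_univ_three, Matrix.cons_val_zero, Matrix.cons_val_one,
    Matrix.head_cons, Matrix.cons_val_two, Matrix.tail_cons]
  ring

lemma Uag_expand (ε : ℝ) (α : Fin 2 → Fin 3 → ℝ) (m : Fin 2) :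
    Uag ε α m = α m 1 * (1 - ε) + α m 2 := by
  simp only [Uag, u2, Fin.sum_univ_three, Matrix.cons_val_zero, Matrix.cons_val_one,
    Matrix.head_cons, Matrix.cons_val_two, Matrix.tail_cons]
  ring

lemma simplex3 {f : Fin 3 → ℝ} (h : f ∈ stdSimplex ℝ (Fin 3)) :
    0 ≤ f 0 ∧ 0 ≤ f 1 ∧ 0 ≤ f 2 ∧ f 0 + f 1 + f 2 = 1 := by
  obtain ⟨h1, h2⟩ := h
  refine ⟨h1 0, h1 1, h1 2, ?_⟩
  rw [← h2, Fin.sum_univ_three]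

set_option maxHeartbeats 1000000 in
/-- For every `ε ∈ (2/9, 1/3)` there is a prior `μ ∈ (0,1)` under
which the principal strictly benefits from commitment: the supremum of the
principal's payoff over incentive-compatible pairs `(α, σ)` strictly exceeds
the supremum over incentive-compatible pairs in which `α` in addition
maximises `P(·, σ)` over all mechanisms. -/
theorem value_of_commitment_strictly_positive
    (ε : ℝ) (hε : ε ∈ Set.Ioo (2 / 9 : ℝ) (1 / 3)) :
    ∃ μ ∈ Set.Ioo (0 : ℝ) 1,
      sSup {x : ℝ | ∃ (α : Fin 2 → Fin 3 → ℝ) (σ : ℝ),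
          IsMech α ∧ IsBR ε α σ ∧ P ε μ α σ = x} >
      sSup {x : ℝ | ∃ (α : Fin 2 → Fin 3 → ℝ) (σ : ℝ),
          IsMech α ∧ IsBR ε α σ ∧
          (∀ α' : Fin 2 → Fin 3 → ℝ, IsMech α' → P ε μ α' σ ≤ P ε μ α σ) ∧
          P ε μ α σ = x} := by
  obtain ⟨hε1, hε2⟩ := hε
  have h4 : (0:ℝ) < 4 - 3*ε := by linarith
  have h2 : (0:ℝ) < 2 - 3*ε := by linarith
  set μ : ℝ := (2 - 3*ε) / (4 - 3*ε) with hμdef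
  have hμeq : μ * (4 - 3*ε) = 2 - 3*ε := div_mul_cancel₀ _ h4.ne'
  have hμ0 : 0 < μ := div_pos h2 h4
  have hμ1 : μ < 1 := (div_lt_one h4).mpr (by linarith)
  have hμ25 : μ < 2/5 := by rw [hμdef, div_lt_iff₀ h4]; linarith
  refine ⟨μ, ⟨hμ0, hμ1⟩, ?_⟩
  -- key bound at σ = 0
  have key : ∀ α' : Fin 2 → Fin 3 → ℝ, IsMech α' → P ε μ α' 0 ≤ 1 + μ := by
    intro α' hm
    obtain ⟨ha, hb, hc, hs⟩ := simplex3 (hm 0)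
    rw [P_expand]
    have hg1 : 4*μ - (1-μ)*(1-3*ε) = 1 + μ := by nlinarith [hμeq]
    have hbg : α' 0 1 * (4*μ - (1-μ)*(1-3*ε)) = α' 0 1 * (1 + μ) := by rw [hg1]
    nlinarith [mul_nonneg hc (by linarith : (0:ℝ) ≤ 2 - 5*μ), hbg,
      mul_nonneg ha hμ0.le, mul_nonneg hb hμ0.le]
  -- crude upper bound
  have bound5 : ∀ (α : Fin 2 → Fin 3 → ℝ) (σ : ℝ), IsMech α → σ ∈ Set.Icc (0:ℝ) 1 →
      P ε μ α σ ≤ 5 := by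
    intro α σ hm hσ
    obtain ⟨ha, hb, hc, hs⟩ := simplex3 (hm 0)
    obtain ⟨hd, he, hf, hs'⟩ := simplex3 (hm 1)
    obtain ⟨hσ0, hσ1⟩ := hσ
    rw [P_expand]
    have e1 : α 0 0 * 2 + α 0 1 * 4 + α 0 2 * 5 ≤ 5 := by linarith
    have e2 : α 0 0 - α 0 1 * (1 - 3*ε) - α 0 2 ≤ 1 := by
      nlinarith [mul_nonneg hb (by linarith : (0:ℝ) ≤ 1 - 3*ε)]
    have e3 : α 1 0 - α 1 1 * (1 - 3*ε) - α 1 2 ≤ 1 := by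
      nlinarith [mul_nonneg he (by linarith : (0:ℝ) ≤ 1 - 3*ε)]
    have i1 : (1 - σ) * (α 0 0 - α 0 1 * (1 - 3*ε) - α 0 2) ≤ (1 - σ) * 1 :=
      mul_le_mul_of_nonneg_left e2 (by linarith)
    have i2 : σ * (α 1 0 - α 1 1 * (1 - 3*ε) - α 1 2) ≤ σ * 1 :=
      mul_le_mul_of_nonneg_left e3 hσ0
    have i3 : μ * (α 0 0 * 2 + α 0 1 * 4 + α 0 2 * 5) ≤ μ * 5 :=
      mul_le_mul_of_nonneg_left e1 hμ0.le
    have i4 : (1 - μ) * ((1 - σ) * (α 0 0 - α 0 1 * (1 - 3*ε) - α 0 2) +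
        σ * (α 1 0 - α 1 1 * (1 - 3*ε) - α 1 2)) ≤ (1 - μ) * 1 :=
      mul_le_mul_of_nonneg_left (by linarith) (by linarith)
    nlinarith [i3, i4]
  -- commitment witness
  have hαcm : IsMech ![![ε, 0, 1-ε], ![0, 1, 0]] := by
    intro m
    refine ⟨fun a => ?_, ?_⟩
    · fin_cases m <;> fin_cases a <;> simp <;> linarith
    · fin_cases m <;> simp [Fin.sum_univ_three]
  have hbrc : IsBR ε ![![ε, 0, 1-ε], ![0, 1, 0]] 1 := by
    refine ⟨⟨zero_le_one, le_refl 1⟩, fun _ => ?_, fun h => absurd h (lt_irrefl 1)⟩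
    rw [Uag_expand, Uag_expand]
    simp
  have hPc : P ε μ ![![ε, 0, 1-ε], ![0, 1, 0]] 1 = μ*(5-3*ε) + (1-μ)*(3*ε-1) := by
    rw [P_expand]
    simp only [Matrix.cons_val_zero, Matrix.cons_val_one, Matrix.head_cons,
      Matrix.cons_val_two, Matrix.tail_cons]
    ring
  -- equilibrium witness for the no-commitment set
  have hem : IsMech ![![(1:ℝ), 0, 0], ![(1:ℝ), 0, 0]] := by
    intro m
    refine ⟨fun a => ?_, ?_⟩
    · fin_cases m <;> fin_cases a <;> simp
    · fin_cases m <;> simp [Fin.sum_univ_three]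
  have hbre : IsBR ε ![![(1:ℝ), 0, 0], ![(1:ℝ), 0, 0]] 0 := by
    refine ⟨⟨le_refl 0, zero_le_one⟩, fun h => absurd h (lt_irrefl 0), fun _ => ?_⟩
    rw [Uag_expand, Uag_expand]
    simp
  have hPe : P ε μ ![![(1:ℝ), 0, 0], ![(1:ℝ), 0, 0]] 0 = 1 + μ := by
    rw [P_expand]
    simp only [Matrix.cons_val_zero, Matrix.cons_val_one, Matrix.head_cons,
      Matrix.cons_val_two, Matrix.tail_cons]
    ring
  have hopte : ∀ α' : Fin 2 → Fin 3 → ℝ, IsMech α' →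
      P ε μ α' 0 ≤ P ε μ ![![(1:ℝ), 0, 0], ![(1:ℝ), 0, 0]] 0 := by
    intro α' h
    rw [hPe]; exact key α' h
  -- bound every element of the no-commitment set by 1 + μ
  have ub2 : ∀ x ∈ {x : ℝ | ∃ (α : Fin 2 → Fin 3 → ℝ) (σ : ℝ),
      IsMech α ∧ IsBR ε α σ ∧
      (∀ α' : Fin 2 → Fin 3 → ℝ, IsMech α' → P ε μ α' σ ≤ P ε μ α σ) ∧
      P ε μ α σ = x}, x ≤ 1 + μ := by
    rintro x ⟨α, σ, hm, ⟨⟨hσ0, hσ1⟩, hbr1, _⟩, hopt, rfl⟩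
    obtain ⟨ha, hb, hc, hs⟩ := simplex3 (hm 0)
    obtain ⟨hd, he, hf, hs'⟩ := simplex3 (hm 1)
    rcases hσ0.eq_or_lt with h0 | h0
    · rw [← h0]; exact key α hm
    · -- σ > 0 : optimality forces α 1 = e₀, then BR forces α 0 = e₀
      have hm' : IsMech ![α 0, ![(1:ℝ), 0, 0]] := by
        intro m
        fin_cases m
        · simpa using hm 0
        · refine ⟨fun a => ?_, ?_⟩
          · fin_cases a <;> simp
          · simp [Fin.sum_univ_three]
      have hopt' := hopt _ hm'
      rw [P_expand, P_expand] at hopt'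
      simp only [Matrix.cons_val_zero, Matrix.cons_val_one, Matrix.head_cons,
        Matrix.cons_val_two, Matrix.tail_cons] at hopt'
      -- hopt' : μ*A + (1-μ)*((1-σ)*B + σ*1) ≤ μ*A + (1-μ)*((1-σ)*B + σ*(...))
      have h15 : (0:ℝ) < 1 - μ := by linarith
      have hD : 0 ≤ (1 - μ) * (σ * ((α 1 0 - α 1 1 * (1 - 3*ε) - α 1 2) - 1)) := by
        nlinarith [hopt']
      have hge : (1:ℝ) ≤ α 1 0 - α 1 1 * (1 - 3*ε) - α 1 2 := by
        nlinarith [hD, mul_pos h15 h0]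
      have he0 : α 1 1 = 0 := by
        refine le_antisymm ?_ he
        nlinarith [mul_nonneg he (by linarith : (0:ℝ) ≤ 1 - 3*ε)]
      have hf0 : α 1 2 = 0 := by
        refine le_antisymm ?_ hf
        nlinarith [mul_nonneg he (by linarith : (0:ℝ) ≤ 1 - 3*ε)]
      have hU := hbr1 h0
      rw [Uag_expand, Uag_expand, he0, hf0] at hU
      have hb0 : α 0 1 = 0 := by
        refine le_antisymm ?_ hb
        nlinarith [mul_nonneg hb (by linarith : (0:ℝ) ≤ 1 - ε)]
      have hc0 : α 0 2 = 0 := by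
        refine le_antisymm ?_ hc
        nlinarith [mul_nonneg hb (by linarith : (0:ℝ) ≤ 1 - ε)]
      have ha1 : α 0 0 = 1 := by rw [hb0, hc0] at hs; linarith
      have hd1 : α 1 0 = 1 := by rw [he0, hf0] at hs'; linarith
      rw [P_expand, ha1, hb0, hc0, hd1, he0, hf0]
      ring_nf
      linarith
  -- assemble
  have bdd1 : BddAbove {x : ℝ | ∃ (α : Fin 2 → Fin 3 → ℝ) (σ : ℝ),
      IsMech α ∧ IsBR ε α σ ∧ P ε μ α σ = x} := by
    refine ⟨5, ?_⟩
    rintro x ⟨α, σ, hm, hbr, rfl⟩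
    exact bound5 α σ hm hbr.1
  have hle1 : μ*(5-3*ε) + (1-μ)*(3*ε-1) ≤
      sSup {x : ℝ | ∃ (α : Fin 2 → Fin 3 → ℝ) (σ : ℝ),
        IsMech α ∧ IsBR ε α σ ∧ P ε μ α σ = x} := by
    rw [← hPc]
    exact le_csSup bdd1 ⟨_, 1, hαcm, hbrc, rfl⟩
  have hle2 : sSup {x : ℝ | ∃ (α : Fin 2 → Fin 3 → ℝ) (σ : ℝ),
      IsMech α ∧ IsBR ε α σ ∧
      (∀ α' : Fin 2 → Fin 3 → ℝ, IsMech α' → P ε μ α' σ ≤ P ε μ α σ) ∧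
      P ε μ α σ = x} ≤ 1 + μ :=
    csSup_le ⟨_, _, 0, hem, hbre, hopte, rfl⟩ ub2
  have hgap : 1 + μ < μ*(5-3*ε) + (1-μ)*(3*ε-1) := by
    nlinarith [hμeq, mul_pos hμ0 (show (0:ℝ) < 1 - 3*ε by linarith)]
  exact lt_of_le_of_lt hle2 (lt_of_lt_of_le hgap hle1)
end
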